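/- arXiv:2402.02720 — 8 statements merged into one kernel-verified Lean document; each statement's English description precedes it below -/
import Mathlib

section
/- Let X ⊂ ℝ^d be a closed convex set of diameter at most D, let l_1,…,l_T be convex G-Lipschitz functions on X, and let λ_1,…,λ_{T-1} ∈ (0,∞) be discount factors. Consider Online Gradient Descent: x_1 ∈ X arbitrary and x_{t+1} = Π_X(x_t − η_t g_t), where g_t ∈ ∂l_t(x_t), Π_X is the Euclidean projection onto X, and η_t = D·G^{-1}·H_t^{-1/2}. Then for all T ∈ ℕ_+ and all comparators u ∈ X, the discounted regret satisfies Reg_T := Σ_{t=1}^T (∏_{i=t}^{T-1} λ_i)·[l_t(x_t) − l_t(u)] ≤ (3/2)·D·G·√H_T. -/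
open scoped BigOperators RealInnerProductSpace

/-!
Projecting onto `X` does not increase the distance to `u`, so each step of online gradient descent
gives `⟪gₜ, xₜ - u⟫ ≤ (‖xₜ - u‖² - ‖xₜ₊₁ - u‖²) / (2ηₜ) + ηₜG²/2`. Weight round `t` by
`βₜ = λₜ ⋯ λ_{T-1}`. The key identity is `βₜ² Hₜ = Kₜ := β₁² + ⋯ + βₜ²`, so that `βₜ/ηₜ = G√Kₜ/D`
is nondecreasing and summation by parts bounds the distance terms by `(G/2D) √K_T D²`, while
`βₜηₜ = (D/G) βₜ²/√Kₜ` and `∑ βₜ²/√Kₜ ≤ 2√K_T`. Since `K_T = H_T`, the two contributions are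
`DG√H_T/2` and `DG√H_T`.
-/

open Finset

section

variable {F : Type*} [NormedAddCommGroup F] [InnerProductSpace ℝ F] {X : Set F} {p z u : F}

-- Via the first-order optimality condition `⟪z - p, u - p⟫ ≤ 0` of the projection `p` of `z`.
lemma norm_sub_sq_le_of_forall_norm_sub_le (hX : Convex ℝ X) (hp : p ∈ X) (hu : u ∈ X)
    (hmin : ∀ y ∈ X, ‖p - z‖ ≤ ‖y - z‖) : ‖p - u‖ ^ 2 ≤ ‖z - u‖ ^ 2 := by
  have : Nonempty X := ⟨⟨p, hp⟩⟩
  have hinf : ‖z - p‖ = ⨅ w : X, ‖z - w‖ :=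
    le_antisymm (le_ciInf fun w => by simpa only [norm_sub_rev z] using hmin w w.2)
      (ciInf_le ⟨0, by rintro r ⟨w, rfl⟩; positivity⟩ (⟨p, hp⟩ : X))
  have hvar := (norm_eq_iInf_iff_real_inner_le_zero hX hp).mp hinf u hu
  have hexpand : ‖z - u‖ ^ 2 = ‖z - p‖ ^ 2 - 2 * ⟪z - p, u - p⟫ + ‖u - p‖ ^ 2 := by
    rw [← norm_sub_sq_real, sub_sub_sub_cancel_right]
  rw [norm_sub_rev p u]
  nlinarith [sq_nonneg ‖z - p‖]

lemma inner_le_of_projected_step {g x : F} {η G : ℝ} (hX : Convex ℝ X) (hp : p ∈ X)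
    (hu : u ∈ X) (hmin : ∀ y ∈ X, ‖p - (x - η • g)‖ ≤ ‖y - (x - η • g)‖) (hη : 0 < η)
    (hg : ‖g‖ ≤ G) :
    ⟪g, x - u⟫ ≤ (‖x - u‖ ^ 2 - ‖p - u‖ ^ 2) / (2 * η) + η * G ^ 2 / 2 := by
  have hproj := norm_sub_sq_le_of_forall_norm_sub_le hX hp hu hmin
  have hexpand : ‖x - η • g - u‖ ^ 2 = ‖x - u‖ ^ 2 - 2 * (η * ⟪g, x - u⟫) + η ^ 2 * ‖g‖ ^ 2 := by
    rw [sub_right_comm, norm_sub_sq_real, real_inner_smul_right, norm_smul, Real.norm_eq_abs,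
      mul_pow, sq_abs, real_inner_comm]
  have hg2 : η ^ 2 * ‖g‖ ^ 2 ≤ η ^ 2 * G ^ 2 := by gcongr
  rw [div_add_div _ _ (by positivity) two_ne_zero, le_div_iff₀ (by positivity)]
  nlinarith

lemma sub_le_inner_of_subgradient {f : F → ℝ} {g x u : F} (hsub : f x + ⟪g, u - x⟫ ≤ f u) :
    f x - f u ≤ ⟪g, x - u⟫ := by
  rw [← neg_sub, inner_neg_right] at hsub
  linarith

end

lemma sum_mul_sub_succ_le {c a : ℕ → ℝ} {B : ℝ} (hc0 : 0 ≤ c 0) (hc : Monotone c)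
    (haB : ∀ t, a t ≤ B) (T : ℕ) :
    ∑ t ∈ Icc 1 T, c t * (a t - a (t + 1)) ≤ c T * (B - a (T + 1)) := by
  induction T with
  | zero => simpa using mul_nonneg hc0 (sub_nonneg.2 (haB 1))
  | succ n ih =>
    rw [sum_Icc_succ_top (by omega)]
    have : c n * (B - a (n + 1)) ≤ c (n + 1) * (B - a (n + 1)) :=
      mul_le_mul_of_nonneg_right (hc n.le_succ) (sub_nonneg.2 (haB _))
    linarith

lemma div_sqrt_le_two_mul_sub_sqrt {a b : ℝ} (ha : 0 ≤ a) (hab : a ≤ b) :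
    (b - a) / √b ≤ 2 * (√b - √a) := by
  rcases (ha.trans hab).eq_or_lt with hb | hb
  · obtain rfl : a = 0 := le_antisymm (hb ▸ hab) ha
    simp [← hb]
  · have hsa : √a ≤ √b := Real.sqrt_le_sqrt hab
    rw [div_le_iff₀ (Real.sqrt_pos.2 hb)]
    nlinarith [Real.sq_sqrt ha, Real.sq_sqrt hb.le, Real.sqrt_nonneg a]

lemma sum_div_sqrt_partialSum_le {b : ℕ → ℝ} (hb : ∀ t, 0 ≤ b t) (T : ℕ) :
    ∑ t ∈ Icc 1 T, b t / √(∑ i ∈ Icc 1 t, b i) ≤ 2 * √(∑ i ∈ Icc 1 T, b i) := by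
  induction T with
  | zero => simp
  | succ n ih =>
    have hsum : ∑ i ∈ Icc 1 (n + 1), b i = ∑ i ∈ Icc 1 n, b i + b (n + 1) :=
      sum_Icc_succ_top (by omega) b
    have hstep := div_sqrt_le_two_mul_sub_sqrt (sum_nonneg fun i _ => hb i)
      (le_add_of_nonneg_right (a := ∑ i ∈ Icc 1 n, b i) (hb (n + 1)))
    rw [sum_Icc_succ_top (by omega), hsum]
    rw [add_sub_cancel_left] at hstep
    linarith

-- With `η = D / (G s)` and `√Kₜ = βₜ s`: the round bound in the form in which it is summed.
lemma mul_le_of_le_step_bound {r a a' β s D G : ℝ} (hβ : 0 < β) (hs : 0 < s) (hD : 0 < D)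
    (hG : 0 < G) (hr : r ≤ (a - a') / (2 * (D * G⁻¹ * s⁻¹)) + D * G⁻¹ * s⁻¹ * G ^ 2 / 2) :
    β * r ≤ G / (2 * D) * (β * s * (a - a')) + D * G / 2 * (β ^ 2 / (β * s)) := by
  calc β * r ≤ β * ((a - a') / (2 * (D * G⁻¹ * s⁻¹)) + D * G⁻¹ * s⁻¹ * G ^ 2 / 2) :=
        mul_le_mul_of_nonneg_left hr hβ.le
    _ = _ := by field_simp

lemma sum_round_bounds_le {β a : ℕ → ℝ} {D G : ℝ} (hD : 0 < D) (hG : 0 ≤ G)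
    (ha : ∀ t, 0 ≤ a t) (haD : ∀ t, a t ≤ D ^ 2) (T : ℕ) :
    ∑ t ∈ Icc 1 T, (G / (2 * D) * (√(∑ i ∈ Icc 1 t, β i ^ 2) * (a t - a (t + 1)))
        + D * G / 2 * (β t ^ 2 / √(∑ i ∈ Icc 1 t, β i ^ 2)))
      ≤ 3 / 2 * D * G * √(∑ i ∈ Icc 1 T, β i ^ 2) := by
  set S : ℕ → ℝ := fun t => √(∑ i ∈ Icc 1 t, β i ^ 2)
  have hS_mono : Monotone S := fun s t hst => Real.sqrt_le_sqrt <|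
    sum_le_sum_of_subset_of_nonneg (Icc_subset_Icc_right hst) fun i _ _ => sq_nonneg _
  calc _ = G / (2 * D) * (∑ t ∈ Icc 1 T, S t * (a t - a (t + 1)))
        + D * G / 2 * ∑ t ∈ Icc 1 T, β t ^ 2 / S t := by rw [sum_add_distrib, mul_sum, mul_sum]
    _ ≤ G / (2 * D) * (S T * D ^ 2) + D * G / 2 * (2 * S T) := by
      gcongr
      · refine (sum_mul_sub_succ_le (Real.sqrt_nonneg _) hS_mono haD T).trans ?_
        gcongr
        exact sub_le_self _ (ha _)
      · exact sum_div_sqrt_partialSum_le (fun t => sq_nonneg _) T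
    _ = 3 / 2 * D * G * S T := by
      field_simp
      ring

def discount (lam : ℕ → ℝ) (s t : ℕ) : ℝ := ∏ i ∈ Icc s (t - 1), lam i

lemma discount_pos {lam : ℕ → ℝ} (hlam : ∀ i, 0 < lam i) (s t : ℕ) : 0 < discount lam s t :=
  prod_pos fun i _ => hlam i

lemma sum_sq_discount_pos {lam : ℕ → ℝ} (hlam : ∀ i, 0 < lam i) {t : ℕ} (ht : 1 ≤ t) :
    0 < ∑ i ∈ Icc 1 t, discount lam i t ^ 2 :=
  sum_pos (fun i _ => pow_pos (discount_pos hlam i t) 2) ⟨1, mem_Icc.2 ⟨le_rfl, ht⟩⟩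

lemma discount_mul_discount (lam : ℕ → ℝ) {r s t : ℕ} (hr : 1 ≤ r) (hrs : r ≤ s) (hst : s ≤ t) :
    discount lam r s * discount lam s t = discount lam r t := by
  have hIco : ∀ {a b : ℕ}, 1 ≤ b → Icc a (b - 1) = Ico a b := fun hb => by
    ext; simp only [mem_Icc, mem_Ico]; omega
  simp only [discount, hIco (hr.trans hrs), hIco (hr.trans (hrs.trans hst))]
  exact prod_Ico_consecutive lam hrs hst

lemma sqrt_sum_sq_discount {lam : ℕ → ℝ} (hlam : ∀ i, 0 ≤ lam i) {s t : ℕ} (hst : s ≤ t) :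
    √(∑ i ∈ Icc 1 s, discount lam i t ^ 2)
      = discount lam s t * √(∑ i ∈ Icc 1 s, discount lam i s ^ 2) := by
  have hsq : ∑ i ∈ Icc 1 s, discount lam i t ^ 2
      = discount lam s t ^ 2 * ∑ i ∈ Icc 1 s, discount lam i s ^ 2 := by
    rw [mul_sum]
    refine sum_congr rfl fun i hi => ?_
    obtain ⟨hi1, his⟩ := mem_Icc.1 hi
    rw [← discount_mul_discount lam hi1 his hst]
    ring
  rw [hsq, Real.sqrt_mul (sq_nonneg _),
    Real.sqrt_sq (x := discount lam s t) (prod_nonneg fun i _ => hlam i)]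

theorem ogd_discounted_regret_general
    (d T : ℕ)
    (X : Set (EuclideanSpace ℝ (Fin d))) (hXconvex : Convex ℝ X)
    (D G : ℝ) (hD : 0 < D) (hG : 0 < G)
    (hdiam : ∀ x ∈ X, ∀ y ∈ X, ‖x - y‖ ≤ D)
    (lam : ℕ → ℝ) (hlam : ∀ i, 0 < lam i)
    (l : ℕ → EuclideanSpace ℝ (Fin d) → ℝ)
    (x g : ℕ → EuclideanSpace ℝ (Fin d))
    (hxX : ∀ t, x t ∈ X)
    (hsub : ∀ t, ∀ y ∈ X, l t (x t) + ⟪g t, y - x t⟫ ≤ l t y)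
    (hLip : ∀ t, ‖g t‖ ≤ G)
    (H : ℕ → ℝ)
    (hH : ∀ t, H t = ∑ i ∈ Finset.Icc 1 t, ∏ j ∈ Finset.Icc i (t-1), (lam j)^2)
    (η : ℕ → ℝ) (hη : ∀ t, η t = D * G⁻¹ * (Real.sqrt (H t))⁻¹)
    (hOGD : ∀ t, 1 ≤ t → x (t+1) ∈ X ∧
      ∀ y ∈ X, ‖x (t+1) - (x t - η t • g t)‖ ≤ ‖y - (x t - η t • g t)‖)
    (u : EuclideanSpace ℝ (Fin d)) (hu : u ∈ X) :
    ∑ t ∈ Finset.Icc 1 T, (∏ i ∈ Finset.Icc t (T-1), lam i) * (l t (x t) - l t u)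
      ≤ (3/2) * D * G * Real.sqrt (H T) := by
  set K : ℕ → ℝ := fun t => ∑ i ∈ Icc 1 t, discount lam i T ^ 2
  have hH_eq : ∀ t, H t = ∑ i ∈ Icc 1 t, discount lam i t ^ 2 := fun t => by
    simp only [hH, discount, prod_pow]
  have hround : ∀ t ∈ Icc 1 T, discount lam t T * (l t (x t) - l t u) ≤
      G / (2 * D) * (√(K t) * (‖x t - u‖ ^ 2 - ‖x (t + 1) - u‖ ^ 2))
        + D * G / 2 * (discount lam t T ^ 2 / √(K t)) := by
    intro t ht
    obtain ⟨ht1, htT⟩ := mem_Icc.1 ht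
    have hHt : 0 < √(H t) := Real.sqrt_pos.2 (hH_eq t ▸ sum_sq_discount_pos hlam ht1)
    obtain ⟨hmem, hmin⟩ := hOGD t ht1
    have hstep :=
      inner_le_of_projected_step hXconvex hmem hu hmin (hη t ▸ by positivity) (hLip t)
    rw [hη] at hstep
    rw [show √(K t) = _ from sqrt_sum_sq_discount (fun i => (hlam i).le) htT, ← hH_eq]
    exact mul_le_of_le_step_bound (discount_pos hlam t T) hHt hD hG
      ((sub_le_inner_of_subgradient (hsub t u hu)).trans hstep)
  have hdist : ∀ t, ‖x t - u‖ ^ 2 ≤ D ^ 2 := fun t =>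
    pow_le_pow_left₀ (norm_nonneg _) (hdiam _ (hxX t) u hu) 2
  calc _ ≤ _ := sum_le_sum hround
    _ ≤ 3 / 2 * D * G * √(K T) := sum_round_bounds_le hD hG.le (fun t => sq_nonneg _) hdist T
    _ = 3 / 2 * D * G * √(H T) := by rw [hH_eq T]

/-- Constant-scheme OGD with learning rate `η_t = D·G⁻¹·H_t^{-1/2}`
achieves discounted regret at most `(3/2)·D·G·√H_T`. -/
theorem ogd_discounted_regret
    (d T : ℕ) (hT : 1 ≤ T)
    (X : Set (EuclideanSpace ℝ (Fin d))) (hXclosed : IsClosed X) (hXconvex : Convex ℝ X)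
    (D G : ℝ) (hD : 0 < D) (hG : 0 < G)
    (hdiam : ∀ x ∈ X, ∀ y ∈ X, ‖x - y‖ ≤ D)
    (lam : ℕ → ℝ) (hlam : ∀ i, 0 < lam i)
    (l : ℕ → EuclideanSpace ℝ (Fin d) → ℝ)
    (hconv : ∀ t, ConvexOn ℝ X (l t))
    (x g : ℕ → EuclideanSpace ℝ (Fin d))
    (hxX : ∀ t, x t ∈ X)
    (hsub : ∀ t, ∀ y ∈ X, l t (x t) + ⟪g t, y - x t⟫ ≤ l t y)
    (hLip : ∀ t, ‖g t‖ ≤ G)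
    (H : ℕ → ℝ)
    (hH : ∀ t, H t = ∑ i ∈ Finset.Icc 1 t, ∏ j ∈ Finset.Icc i (t-1), (lam j)^2)
    (η : ℕ → ℝ) (hη : ∀ t, η t = D * G⁻¹ * (Real.sqrt (H t))⁻¹)
    (hOGD : ∀ t, 1 ≤ t → x (t+1) ∈ X ∧
      ∀ y ∈ X, ‖x (t+1) - (x t - η t • g t)‖ ≤ ‖y - (x t - η t • g t)‖)
    (u : EuclideanSpace ℝ (Fin d)) (hu : u ∈ X) :
    ∑ t ∈ Finset.Icc 1 T, (∏ i ∈ Finset.Icc t (T-1), lam i) * (l t (x t) - l t u)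
      ≤ (3/2) * D * G * Real.sqrt (H T) :=
  ogd_discounted_regret_general d T X hXconvex D G hD hG hdiam lam hlam l x g hxX hsub hLip H hH η
    hη hOGD u hu
end

section
/- Let X ⊂ ℝ^d be a closed convex set of diameter at most D, let l_1,…,l_T be convex G-Lipschitz functions on X, and let the discount factors be constant: λ_t = λ for some λ ∈ (0,1). Consider Online Gradient Descent with the time-invariant learning rate η = D·G^{-1}·√(1−λ²): x_{t+1} = Π_X(x_t − η g_t) with g_t ∈ ∂l_t(x_t). Then for all T ≥ (1/2)·(1−λ)^{-1} and all comparators u ∈ X, the discounted regret satisfies Reg_T := Σ_{t=1}^T λ^{T−t}·[l_t(x_t) − l_t(u)] ≤ (3/2)·D·G/√(1−λ²) ≤ (3/(2√(1−e^{-1})))·D·G·√H_T. -/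
/-!
A projected gradient step gives `l_t(x_t) - l_t(u) ≤ ⟪g_t, x_t - u⟫ ≤
(‖x_t - u‖² - ‖x_{t+1} - u‖²) / (2η) + η ‖g_t‖² / 2`, since projecting onto a convex set does
not increase the distance to its points. With the weights `λ^(T-t)` the distance terms
telescope with nonnegative coefficients (as `λ ≤ 1`) to at most `D²`, and the weights sum to at
most `1 / (1 - λ)`; hence `Reg_T ≤ D² / (2η) + η G² / (2 (1 - λ))`, which for the chosen `η` is
at most `(3/2) D G / √(1 - λ²)` because `1 - λ² ≤ 2 (1 - λ)`. Finally
`H_T = (1 - λ^(2T)) / (1 - λ²)` and `λ^(2T) ≤ e^(-2T(1 - λ)) ≤ e^(-1)`.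
-/

open scoped RealInnerProductSpace
open Finset

theorem sum_Icc_pow_mul_sub_succ_le {lam B : ℝ} {a : ℕ → ℝ} (hlam0 : 0 ≤ lam) (hlam1 : lam ≤ 1)
    (ha : ∀ t, 1 ≤ t → a t ≤ B) (n : ℕ) :
    ∑ t ∈ Icc 1 n, lam ^ (n - t) * (a t - a (t + 1)) ≤ B - a (n + 1) := by
  induction n with
  | zero => simpa using ha 1 le_rfl
  | succ n ih =>
    have hshift : ∑ t ∈ Icc 1 n, lam ^ (n + 1 - t) * (a t - a (t + 1))
        = lam * ∑ t ∈ Icc 1 n, lam ^ (n - t) * (a t - a (t + 1)) := by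
      rw [mul_sum]
      refine sum_congr rfl fun t ht => ?_
      rw [Nat.sub_add_comm (mem_Icc.mp ht).2, pow_succ]
      ring
    rw [sum_Icc_succ_top (by omega), hshift, Nat.sub_self, pow_zero, one_mul]
    nlinarith [ha (n + 1) (by omega), mul_le_mul_of_nonneg_left ih hlam0]

theorem sum_Icc_one_tsub_eq_sum_range {M : Type*} [AddCommMonoid M] (f : ℕ → M) (n : ℕ) :
    ∑ t ∈ Icc 1 n, f (n - t) = ∑ k ∈ range n, f k := by
  refine sum_nbij' (fun t => n - t) (fun k => n - k) ?_ ?_ ?_ ?_ fun _ _ => rfl <;>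
    intro a ha <;> simp only [mem_Icc, mem_range] at ha ⊢ <;> omega

theorem pow_le_exp_neg_mul_one_sub {lam : ℝ} (hlam : 0 ≤ lam) (n : ℕ) :
    lam ^ n ≤ Real.exp (-(n * (1 - lam))) := by
  calc lam ^ n ≤ Real.exp (lam - 1) ^ n := by
        gcongr
        linarith [Real.add_one_le_exp (lam - 1)]
    _ = Real.exp (-(n * (1 - lam))) := by rw [← Real.exp_nat_mul]; ring_nf

section ProjectedGradient

variable {E : Type*} [NormedAddCommGroup E] [InnerProductSpace ℝ E] {K : Set E}

theorem norm_sub_le_of_forall_norm_sub_le (hK : Convex ℝ K) {z p u : E} (hp : p ∈ K)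
    (hmin : ∀ y ∈ K, ‖p - z‖ ≤ ‖y - z‖) (hu : u ∈ K) : ‖p - u‖ ≤ ‖z - u‖ := by
  have : Nonempty K := ⟨⟨p, hp⟩⟩
  have hbdd : BddBelow (Set.range fun w : K => ‖z - w‖) :=
    ⟨0, by rintro _ ⟨w, rfl⟩; exact norm_nonneg _⟩
  have hinf : ‖z - p‖ = ⨅ w : K, ‖z - w‖ :=
    le_antisymm (le_ciInf fun w => by simpa only [norm_sub_rev z] using hmin w w.2)
      (ciInf_le hbdd ⟨p, hp⟩)
  have hobtuse : ⟪z - p, u - p⟫ ≤ 0 := (norm_eq_iInf_iff_real_inner_le_zero hK hp).mp hinf u hu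
  have hsplit : ‖z - u‖ ^ 2 = ‖z - p‖ ^ 2 - 2 * ⟪z - p, u - p⟫ + ‖p - u‖ ^ 2 := by
    rw [← sub_add_sub_cancel z p u, norm_add_sq_real, ← neg_sub u p, inner_neg_right]
    ring
  exact pow_le_pow_iff_left₀ (norm_nonneg _) (norm_nonneg _) two_ne_zero |>.mp <| by
    nlinarith [sq_nonneg ‖z - p‖]

theorem inner_le_of_projected_gradient_step (hK : Convex ℝ K) {x g p u : E} {η : ℝ}
    (hη : 0 < η) (hp : p ∈ K) (hmin : ∀ y ∈ K, ‖p - (x - η • g)‖ ≤ ‖y - (x - η • g)‖)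
    (hu : u ∈ K) :
    ⟪g, x - u⟫ ≤ (‖x - u‖ ^ 2 - ‖p - u‖ ^ 2) / (2 * η) + η / 2 * ‖g‖ ^ 2 := by
  have hproj := norm_sub_le_of_forall_norm_sub_le hK hp hmin hu
  have hstep : ‖x - η • g - u‖ ^ 2 = ‖x - u‖ ^ 2 - 2 * η * ⟪g, x - u⟫ + η ^ 2 * ‖g‖ ^ 2 := by
    rw [sub_right_comm, norm_sub_sq_real, real_inner_smul_right, norm_smul, Real.norm_eq_abs,
      abs_of_pos hη, mul_pow, real_inner_comm]
    ring
  have hsq := pow_le_pow_left₀ (norm_nonneg _) hproj 2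
  rw [div_add' _ _ _ (by positivity), le_div_iff₀ (by positivity)]
  nlinarith

theorem discounted_regret_le_of_projected_gradient (hK : Convex ℝ K) {D G lam η : ℝ}
    (hlam0 : 0 ≤ lam) (hlam1 : lam < 1) (hη : 0 < η) {l : ℕ → E → ℝ} {x g : ℕ → E} {u : E}
    (hu : u ∈ K) (hdist : ∀ t, 1 ≤ t → ‖x t - u‖ ≤ D)
    (hsub : ∀ t, l t (x t) + ⟪g t, u - x t⟫ ≤ l t u) (hLip : ∀ t, ‖g t‖ ≤ G)
    (hOGD : ∀ t, 1 ≤ t → x (t + 1) ∈ K ∧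
      ∀ y ∈ K, ‖x (t + 1) - (x t - η • g t)‖ ≤ ‖y - (x t - η • g t)‖) (T : ℕ) :
    ∑ t ∈ Icc 1 T, lam ^ (T - t) * (l t (x t) - l t u)
      ≤ D ^ 2 / (2 * η) + η * G ^ 2 / (2 * (1 - lam)) := by
  have hstep : ∀ t ∈ Icc 1 T, lam ^ (T - t) * (l t (x t) - l t u)
      ≤ lam ^ (T - t) * (‖x t - u‖ ^ 2 - ‖x (t + 1) - u‖ ^ 2) / (2 * η)
        + lam ^ (T - t) * (η / 2 * G ^ 2) := by
    intro t ht
    obtain ⟨hmem, hmin⟩ := hOGD t (mem_Icc.mp ht).1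
    have hlin : l t (x t) - l t u ≤ ⟪g t, x t - u⟫ := by
      have := hsub t
      rw [← neg_sub (x t) u, inner_neg_right] at this
      linarith
    have hG : ‖g t‖ ^ 2 ≤ G ^ 2 := pow_le_pow_left₀ (norm_nonneg _) (hLip t) 2
    have := inner_le_of_projected_gradient_step hK hη hmem hmin hu
    rw [mul_div_assoc, ← mul_add]
    gcongr
    nlinarith
  have htele := sum_Icc_pow_mul_sub_succ_le hlam0 hlam1.le (a := fun t => ‖x t - u‖ ^ 2)
    (fun t ht => pow_le_pow_left₀ (norm_nonneg _) (hdist t ht) 2) T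
  have hgeom : ∑ t ∈ Icc 1 T, lam ^ (T - t) ≤ 1 / (1 - lam) := by
    calc _ = ∑ k ∈ range T, lam ^ k := sum_Icc_one_tsub_eq_sum_range (lam ^ ·) T
      _ ≤ lam ^ 0 / (1 - lam) := range_eq_Ico T ▸ geom_sum_Ico_le_of_lt_one hlam0 hlam1
      _ = 1 / (1 - lam) := by rw [pow_zero]
  calc _ ≤ _ := sum_le_sum hstep
    _ = (∑ t ∈ Icc 1 T, lam ^ (T - t) * (‖x t - u‖ ^ 2 - ‖x (t + 1) - u‖ ^ 2)) / (2 * η)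
        + (∑ t ∈ Icc 1 T, lam ^ (T - t)) * (η / 2 * G ^ 2) := by
      rw [sum_add_distrib, sum_div, sum_mul]
    _ ≤ D ^ 2 / (2 * η) + 1 / (1 - lam) * (η / 2 * G ^ 2) := by
      gcongr
      linarith [sq_nonneg ‖x (T + 1) - u‖]
    _ = _ := by field_simp

end ProjectedGradient

theorem sq_div_add_le_of_eq_mul_sqrt {D G lam η : ℝ} (hD : 0 < D) (hG : 0 < G)
    (hlam : lam ^ 2 < 1) (hη : η = D * G⁻¹ * √(1 - lam ^ 2)) :
    D ^ 2 / (2 * η) + η * G ^ 2 / (2 * (1 - lam)) ≤ 3 / 2 * D * G / √(1 - lam ^ 2) := by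
  have hlam1 : 0 < 1 - lam := by nlinarith
  set s := √(1 - lam ^ 2)
  have hs : 0 < s := Real.sqrt_pos.mpr (by linarith)
  have hs2 : s ^ 2 = 1 - lam ^ 2 := Real.sq_sqrt (by linarith)
  have hfirst : D ^ 2 / (2 * η) = D * G / (2 * s) := by rw [hη]; field_simp
  have hsecond : η * G ^ 2 / (2 * (1 - lam)) ≤ D * G / s := by
    have hηG : η * G ^ 2 = D * G * s := by rw [hη]; field_simp
    have hs2_le : s ^ 2 ≤ 2 * (1 - lam) := by nlinarith [sq_nonneg (1 - lam)]
    rw [hηG, div_le_div_iff₀ (by positivity) hs]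
    nlinarith [mul_le_mul_of_nonneg_left hs2_le (mul_pos hD hG).le]
  calc _ ≤ D * G / (2 * s) + D * G / s := by rw [hfirst]; gcongr
    _ = _ := by field_simp; ring

theorem one_sub_exp_neg_one_div_le_sum_Icc_pow {lam : ℝ} {T : ℕ} (hlam0 : 0 ≤ lam)
    (hlam1 : lam < 1) (hT : 1 / 2 * (1 - lam)⁻¹ ≤ T) :
    (1 - Real.exp (-1)) / (1 - lam ^ 2) ≤ ∑ i ∈ Icc 1 T, lam ^ (2 * (T - i)) := by
  have hlam2 : 0 < 1 - lam ^ 2 := by nlinarith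
  have hT' : 1 ≤ 2 * T * (1 - lam) := by
    have := mul_le_mul_of_nonneg_right hT (sub_pos.mpr hlam1).le
    rw [mul_assoc, inv_mul_cancel₀ (sub_pos.mpr hlam1).ne'] at this
    linarith
  have hpow : lam ^ (2 * T) ≤ Real.exp (-1) := by
    refine (pow_le_exp_neg_mul_one_sub hlam0 _).trans (Real.exp_le_exp.mpr ?_)
    push_cast
    linarith
  have hsum : ∑ i ∈ Icc 1 T, lam ^ (2 * (T - i)) = ∑ k ∈ range T, (lam ^ 2) ^ k := by
    simp only [pow_mul]
    exact sum_Icc_one_tsub_eq_sum_range ((lam ^ 2) ^ ·) T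
  rw [div_le_iff₀ hlam2, hsum, geom_sum_mul_neg, ← pow_mul]
  linarith

theorem constant_lr_ogd_discounted_regret_general
    (d T : ℕ)
    (X : Set (EuclideanSpace ℝ (Fin d))) (hXconvex : Convex ℝ X)
    (D G : ℝ) (hD : 0 < D) (hG : 0 < G)
    (hdiam : ∀ x ∈ X, ∀ y ∈ X, ‖x - y‖ ≤ D)
    (lam : ℝ) (hlam0 : 0 < lam) (hlam1 : lam < 1)
    (hT : (1/2) * (1 - lam)⁻¹ ≤ (T : ℝ))
    (l : ℕ → EuclideanSpace ℝ (Fin d) → ℝ)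
    (x g : ℕ → EuclideanSpace ℝ (Fin d))
    (hxX : ∀ t, x t ∈ X)
    (hsub : ∀ t, ∀ y ∈ X, l t (x t) + ⟪g t, y - x t⟫ ≤ l t y)
    (hLip : ∀ t, ‖g t‖ ≤ G)
    (η : ℝ) (hη : η = D * G⁻¹ * Real.sqrt (1 - lam^2))
    (hOGD : ∀ t, 1 ≤ t → x (t+1) ∈ X ∧
      ∀ y ∈ X, ‖x (t+1) - (x t - η • g t)‖ ≤ ‖y - (x t - η • g t)‖)
    (u : EuclideanSpace ℝ (Fin d)) (hu : u ∈ X)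
    (H : ℝ) (hH : H = ∑ i ∈ Finset.Icc 1 T, lam ^ (2 * (T - i))) :
    ∑ t ∈ Finset.Icc 1 T, lam ^ (T - t) * (l t (x t) - l t u)
      ≤ (3/2) * D * G / Real.sqrt (1 - lam^2) ∧
    (3/2) * D * G / Real.sqrt (1 - lam^2)
      ≤ 3 / (2 * Real.sqrt (1 - Real.exp (-1))) * D * G * Real.sqrt H := by
  have hlam2 : lam ^ 2 < 1 := by nlinarith
  have hη0 : 0 < η := by rw [hη]; exact mul_pos (by positivity) (Real.sqrt_pos.mpr (by linarith))
  refine ⟨?_, ?_⟩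
  · refine le_trans ?_ (sq_div_add_le_of_eq_mul_sqrt hD hG hlam2 hη)
    exact discounted_regret_le_of_projected_gradient hXconvex hlam0.le hlam1 hη0 hu
      (fun t _ => hdiam _ (hxX t) u hu) (fun t => hsub t u hu) hLip hOGD T
  · have he : 0 < 1 - Real.exp (-1) := by linarith [Real.exp_neg_one_lt_half]
    have hsqrtH : √(1 - Real.exp (-1)) / √(1 - lam ^ 2) ≤ √H := by
      rw [← Real.sqrt_div he.le, hH]
      exact Real.sqrt_le_sqrt (one_sub_exp_neg_one_div_le_sum_Icc_pow hlam0.le hlam1 hT)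
    calc _ = 3 / (2 * √(1 - Real.exp (-1))) * D * G
          * (√(1 - Real.exp (-1)) / √(1 - lam ^ 2)) := by
          field_simp [(Real.sqrt_pos.mpr he).ne']
      _ ≤ _ := by gcongr

/-- Constant-LR OGD with `η = D·G⁻¹·√(1−λ²)` achieves discounted regret
at most `(3/2)·D·G/√(1−λ²) ≤ (3/(2√(1−e⁻¹)))·D·G·√H_T`, for `T ≥ (1/2)(1−λ)⁻¹`. -/
theorem constant_lr_ogd_discounted_regret
    (d T : ℕ)
    (X : Set (EuclideanSpace ℝ (Fin d))) (hXclosed : IsClosed X) (hXconvex : Convex ℝ X)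
    (D G : ℝ) (hD : 0 < D) (hG : 0 < G)
    (hdiam : ∀ x ∈ X, ∀ y ∈ X, ‖x - y‖ ≤ D)
    (lam : ℝ) (hlam0 : 0 < lam) (hlam1 : lam < 1)
    (hT : (1/2) * (1 - lam)⁻¹ ≤ (T : ℝ))
    (l : ℕ → EuclideanSpace ℝ (Fin d) → ℝ)
    (hconv : ∀ t, ConvexOn ℝ X (l t))
    (x g : ℕ → EuclideanSpace ℝ (Fin d))
    (hxX : ∀ t, x t ∈ X)
    (hsub : ∀ t, ∀ y ∈ X, l t (x t) + ⟪g t, y - x t⟫ ≤ l t y)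
    (hLip : ∀ t, ‖g t‖ ≤ G)
    (η : ℝ) (hη : η = D * G⁻¹ * Real.sqrt (1 - lam^2))
    (hOGD : ∀ t, 1 ≤ t → x (t+1) ∈ X ∧
      ∀ y ∈ X, ‖x (t+1) - (x t - η • g t)‖ ≤ ‖y - (x t - η • g t)‖)
    (u : EuclideanSpace ℝ (Fin d)) (hu : u ∈ X)
    (H : ℝ) (hH : H = ∑ i ∈ Finset.Icc 1 T, lam ^ (2 * (T - i))) :
    ∑ t ∈ Finset.Icc 1 T, lam ^ (T - t) * (l t (x t) - l t u)
      ≤ (3/2) * D * G / Real.sqrt (1 - lam^2) ∧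
    (3/2) * D * G / Real.sqrt (1 - lam^2)
      ≤ 3 / (2 * Real.sqrt (1 - Real.exp (-1))) * D * G * Real.sqrt H :=
  constant_lr_ogd_discounted_regret_general d T X hXconvex D G hD hG hdiam lam hlam0 hlam1 hT l x g
    hxX hsub hLip η hη hOGD u hu H hH
end

section
/- Run the discounted OCP algorithm A_CP with hyperparameter ε > 0 and discount factors λ_t ∈ (0,∞) (λ_0 := 1): initialize S*_{0,clip} = 0, V*_{0,clip} = 0, G*_0 = 0; in round t, if G*_{t-1} = 0 set r̃_t = 0, otherwise set r̃_t = ε·erfi( S*_{t-1,clip} / (2√(V*_{t-1,clip} + 2G*_{t-1}S*_{t-1,clip} + 16(G*_{t-1})²)) ) − ε·G*_{t-1}/√(V*_{t-1,clip} + 2G*_{t-1}S*_{t-1,clip} + 16(G*_{t-1})²) · exp( (S*_{t-1,clip})² / (4(V*_{t-1,clip} + 2G*_{t-1}S*_{t-1,clip} + 16(G*_{t-1})²)) ), where erfi(x) := ∫₀ˣ exp(u²) du; predict r_t = max(r̃_t, 0); receive g*_t ∈ ∂f*_t(r_t), where f*_t is convex on [0,∞), minimized at r*_t ∈ [0,∞),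 and g*_t ≤ 0 whenever r_t = r*_t; set g*_{t,clip} = the projection of g*_t onto [−λ_{t-1}G*_{t-1}, λ_{t-1}G*_{t-1}], S*_{t,clip} = λ_{t-1}·S*_{t-1,clip} − g*_{t,clip}, V*_{t,clip} = λ_{t-1}²·V*_{t-1,clip} + (g*_{t,clip})², G*_t = max(λ_{t-1}·G*_{t-1}, |g*_t|). Then for all t ∈ ℕ_+: |S*_{t,clip}| ≤ 2·√(V*_{t,clip})·(1 + √(log(1 + 2r_{t+1}·ε^{-1}))) + 13·G*_t·(1 + √(log(1 + 2r_{t+1}·ε^{-1})))². -/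
/-!
Two facts about the recursion give the bound. First, `S*_t ≥ -G*_t`: when `S*_{t-1} ≤ 0` the
erfi term is nonpositive, so `A_CP` predicts `r_t = 0`; as `0` lies left of the minimizer `r*_t`,
the gradient there is `≤ 0`, and the clipped gradient cannot push `S*` below `-λ_{t-1} G*_{t-1}`.
Second, for `S*_t > 0` put `D = V* + 2 G* S* + 16 G*²` and `x = S* / (2√D)`. The bound
`erfi x ≥ (e^{x²} - 1) / (2x)` together with `2 G* S* ≤ D` turns `r_{t+1} ≥ r̃_{t+1}` into
`e^{x²} ≤ 2 + 4 x r_{t+1} / ε`. The quadratic identity `S*² = 4 x² D` then gives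
`S* ≤ 2√V* + 13 G*` when `x ≤ 1`, and `S* ≤ 2 x √V* + (8x² + 8x) G*` in general, while for
`x > 1` taking logarithms gives `x ≤ 1 + √log(1 + 2 r_{t+1} / ε)`.
-/

noncomputable def erfi (x : ℝ) : ℝ := ∫ u in (0:ℝ)..x, Real.exp (u^2)

open Real

lemma erfi_nonpos {x : ℝ} (hx : x ≤ 0) : erfi x ≤ 0 := by
  rw [erfi, intervalIntegral.integral_symm, neg_nonpos]
  exact intervalIntegral.integral_nonneg hx fun u _ => (exp_pos _).le

lemma exp_sq_sub_one_le_two_mul_erfi {x : ℝ} (hx : 0 ≤ x) : exp (x ^ 2) - 1 ≤ 2 * x * erfi x := by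
  have hderiv : ∀ u ∈ Set.uIcc 0 x, HasDerivAt (fun v => exp (v ^ 2) / 2) (u * exp (u ^ 2)) u :=
    fun u _ => ((hasDerivAt_pow 2 u).exp.div_const 2).congr_deriv (by ring)
  have hint : ∫ u in (0:ℝ)..x, u * exp (u ^ 2) = (exp (x ^ 2) - 1) / 2 := by
    rw [intervalIntegral.integral_eq_sub_of_hasDerivAt hderiv
      ((by fun_prop : Continuous fun u : ℝ => u * exp (u ^ 2)).intervalIntegrable _ _)]
    simp [sub_div]
  have hmono : ∫ u in (0:ℝ)..x, u * exp (u ^ 2) ≤ ∫ u in (0:ℝ)..x, x * exp (u ^ 2) :=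
    intervalIntegral.integral_mono_on hx
      ((by fun_prop : Continuous fun u : ℝ => u * exp (u ^ 2)).intervalIntegrable _ _)
      ((by fun_prop : Continuous fun u : ℝ => x * exp (u ^ 2)).intervalIntegrable _ _)
      fun u hu => mul_le_mul_of_nonneg_right hu.2 (exp_pos _).le
  rw [intervalIntegral.integral_const_mul, hint] at hmono
  rw [erfi]
  linarith

lemma le_of_sq_le_mul_add {S p q a : ℝ} (hp : 0 ≤ p) (hpa : p ≤ a) (ha : p * a + q ≤ a ^ 2)
    (hS : S ^ 2 ≤ p * S + q) : S ≤ a := by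
  by_contra! h
  nlinarith [mul_pos (sub_pos.2 h) (by linarith : 0 < S + a - p)]

lemma sq_le_of_exp_sq_le {x L : ℝ} (hx : 0 < x) (h : exp (x ^ 2) ≤ 2 * x * exp L) :
    x ^ 2 ≤ L + log 2 + x - 1 := by
  have hlog := log_le_log (exp_pos _) h
  rw [log_exp, log_mul (by positivity) (exp_ne_zero L), log_mul two_ne_zero hx.ne', log_exp] at hlog
  linarith [log_le_sub_one_of_pos hx]

lemma le_of_sq_eq_of_exp_sq_le {S G w x L : ℝ} (hS : 0 ≤ S) (hG : 0 ≤ G) (hw : 0 ≤ w)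
    (hx : 0 < x) (hL : 0 ≤ L) (hSx : S ^ 2 = 4 * x ^ 2 * (w ^ 2 + 2 * G * S + 16 * G ^ 2))
    (hexp : exp (x ^ 2) ≤ 2 + 2 * x * (exp L - 1)) :
    S ≤ 2 * w * (1 + √L) + 13 * G * (1 + √L) ^ 2 := by
  have hu : 0 ≤ √L := sqrt_nonneg L
  rcases le_or_gt x 1 with hx1 | hx1
  · have hSsmall : S ≤ 2 * w + 13 * G := by
      refine le_of_sq_le_mul_add (p := 8 * G) (q := 4 * w ^ 2 + 64 * G ^ 2) (by positivity)
        (by linarith) (by nlinarith) ?_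
      have hx2 : x ^ 2 ≤ 1 := by nlinarith
      nlinarith [mul_le_mul_of_nonneg_right hx2
        (by positivity : 0 ≤ w ^ 2 + 2 * G * S + 16 * G ^ 2)]
    nlinarith [mul_nonneg hw hu, mul_nonneg hG hu, mul_nonneg hG (sq_nonneg √L)]
  · have hK : x ^ 2 ≤ L + log 2 + x - 1 := sq_le_of_exp_sq_le hx (by nlinarith [exp_pos L])
    have hxu : x ≤ 1 + √L := by
      have : x - 1 ≤ √L := le_sqrt_of_sq_le (by linarith [log_two_lt_d9])
      linarith
    have hcoef : 8 * x ^ 2 + 8 * x ≤ 13 * (1 + √L) ^ 2 := by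
      nlinarith [sq_sqrt hL, log_two_lt_d9]
    have hSlarge : S ≤ 2 * x * w + (8 * x ^ 2 + 8 * x) * G := by
      refine le_of_sq_le_mul_add (p := 8 * x ^ 2 * G) (q := 4 * x ^ 2 * w ^ 2 + 64 * x ^ 2 * G ^ 2)
        (by positivity) (by nlinarith [mul_nonneg hx.le hw, mul_nonneg hx.le hG]) ?_ (by nlinarith)
      have : 0 ≤ 16 * x ^ 3 * w * G + 32 * x ^ 2 * w * G + 64 * x ^ 3 * G ^ 2 := by positivity
      nlinarith
    nlinarith [mul_le_mul_of_nonneg_left hxu hw, mul_le_mul_of_nonneg_right hcoef hG]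

noncomputable def acpDenom (S V G : ℝ) : ℝ := V + 2 * G * S + 16 * G ^ 2

/-- The radius `r̃` that `A_CP` proposes after a round ending in the state `(S, V, G)`. -/
noncomputable def acpRadius (eps S V G : ℝ) : ℝ :=
  eps * erfi (S / (2 * √(acpDenom S V G)))
    - eps * G / √(acpDenom S V G) * exp (S ^ 2 / (4 * acpDenom S V G))

lemma acpRadius_nonpos {eps S V G : ℝ} (heps : 0 ≤ eps) (hG : 0 ≤ G) (hS : S ≤ 0) :
    acpRadius eps S V G ≤ 0 := by
  have herfi : erfi (S / (2 * √(acpDenom S V G))) ≤ 0 :=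
    erfi_nonpos (div_nonpos_of_nonpos_of_nonneg hS (by positivity))
  have hexp : 0 ≤ eps * G / √(acpDenom S V G) * exp (S ^ 2 / (4 * acpDenom S V G)) := by
    positivity
  exact sub_nonpos.2 ((mul_nonpos_of_nonneg_of_nonpos heps herfi).trans hexp)

lemma exp_sq_le_of_erfi_sub_le {eps x c r : ℝ} (heps : 0 < eps) (hx : 0 ≤ x) (hc : 4 * x * c ≤ 1)
    (hr : eps * erfi x - eps * c * exp (x ^ 2) ≤ r) : exp (x ^ 2) ≤ 2 + 4 * x * (r / eps) := by
  have herfi := exp_sq_sub_one_le_two_mul_erfi hx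
  have hr' : erfi x - c * exp (x ^ 2) ≤ r / eps := by
    rw [le_div_iff₀ heps]; linarith
  nlinarith [mul_le_mul_of_nonneg_left hr' (by positivity : 0 ≤ 4 * x),
    mul_le_mul_of_nonneg_right hc (exp_pos (x ^ 2)).le]

lemma le_of_acpRadius_le {eps S V G r : ℝ} (heps : 0 < eps) (hV : 0 ≤ V) (hG : 0 < G)
    (hS : 0 < S) (hr0 : 0 ≤ r) (hr : acpRadius eps S V G ≤ r) :
    S ≤ 2 * √V * (1 + √(log (1 + 2 * r * eps⁻¹)))
      + 13 * G * (1 + √(log (1 + 2 * r * eps⁻¹))) ^ 2 := by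
  have hD : 0 < acpDenom S V G := by unfold acpDenom; positivity
  set d := √(acpDenom S V G)
  have hd : 0 < d := sqrt_pos.2 hD
  have hdD : d ^ 2 = acpDenom S V G := sq_sqrt hD.le
  set x := S / (2 * d) with hx_def
  have hx : 0 < x := by positivity
  have hxsq : S ^ 2 / (4 * acpDenom S V G) = x ^ 2 := by
    rw [← hdD, hx_def]; field_simp; ring
  have hexpL : exp (log (1 + 2 * r * eps⁻¹)) = 1 + 2 * r * eps⁻¹ := exp_log (by positivity)
  refine le_of_sq_eq_of_exp_sq_le hS.le hG.le (sqrt_nonneg V) hx (log_nonneg (by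
    nlinarith [mul_nonneg hr0 (inv_nonneg.2 heps.le)])) ?_ ?_
  · rw [sq_sqrt hV, hx_def, ← acpDenom, ← hdD]; field_simp; ring
  · have hc : 4 * x * (G / d) ≤ 1 := by
      have h2SG : 4 * x * (G / d) = 2 * S * G / d ^ 2 := by rw [hx_def]; field_simp; ring
      rw [h2SG, div_le_one (by positivity), hdD, acpDenom]
      nlinarith [sq_nonneg G]
    rw [acpRadius, hxsq, mul_div_assoc] at hr
    rw [hexpL]
    convert exp_sq_le_of_erfi_sub_le heps hx.le hc hr using 2
    field_simp; ring

lemma abs_le_of_acpRadius_le {eps S V G r : ℝ} (heps : 0 < eps) (hV : 0 ≤ V) (hG : 0 < G)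
    (hSG : -G ≤ S) (hr0 : 0 ≤ r) (hr : acpRadius eps S V G ≤ r) :
    |S| ≤ 2 * √V * (1 + √(log (1 + 2 * r * eps⁻¹)))
      + 13 * G * (1 + √(log (1 + 2 * r * eps⁻¹))) ^ 2 := by
  rcases le_or_gt S 0 with hS | hS
  · have hu : 1 ≤ 1 + √(log (1 + 2 * r * eps⁻¹)) := le_add_of_nonneg_right (sqrt_nonneg _)
    rw [abs_of_nonpos hS]
    nlinarith [mul_nonneg (sqrt_nonneg V) (zero_le_one.trans hu),
      mul_le_mul_of_nonneg_left (one_le_pow₀ (n := 2) hu) hG.le]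
  · rw [abs_of_pos hS]
    exact le_of_acpRadius_le heps hV hG hS hr0 hr

lemma abs_clip_le {g c : ℝ} (hc : 0 ≤ c) : |max (-c) (min g c)| ≤ c :=
  abs_le.2 ⟨le_max_left _ _, max_le (by linarith) (min_le_right _ _)⟩

lemma nonpos_of_subgradient_at_zero {φ : ℝ → ℝ} {g m : ℝ} (hm : 0 ≤ m) (hmin : φ m ≤ φ 0)
    (hsub : φ 0 + g * m ≤ φ m) (hzero : 0 = m → g ≤ 0) : g ≤ 0 := by
  rcases hm.eq_or_lt with h | h
  · exact hzero h
  · nlinarith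

section ClippedRecursion

variable {lam S G c : ℕ → ℝ}

lemma eq_zero_of_clipped_step (h0 : S 0 = 0) (hlam : ∀ n, 0 < lam n) (hGnn : ∀ n, 0 ≤ G n)
    (hS : ∀ n, S (n + 1) = lam n * S n - c (n + 1)) (hc : ∀ n, |c (n + 1)| ≤ lam n * G n)
    (hG : ∀ n, lam n * G n ≤ G (n + 1)) : ∀ n, G n = 0 → S n = 0 := by
  intro n
  induction n with
  | zero => exact fun _ => h0
  | succ n ih =>
    intro hGn1
    have hGn : G n = 0 := le_antisymm (by nlinarith [hG n, hlam n, hGnn n]) (hGnn n)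
    have hcn : c (n + 1) = 0 := abs_nonpos_iff.1 (by simpa [hGn] using hc n)
    rw [hS n, ih hGn, hcn, mul_zero, sub_zero]

lemma neg_le_of_clipped_step (h0 : -G 0 ≤ S 0) (hlam : ∀ n, 0 ≤ lam n)
    (hS : ∀ n, S (n + 1) = lam n * S n - c (n + 1)) (hc : ∀ n, |c (n + 1)| ≤ lam n * G n)
    (hG : ∀ n, lam n * G n ≤ G (n + 1)) (hsign : ∀ n, S n < 0 → c (n + 1) ≤ 0) :
    ∀ n, -G n ≤ S n := by
  intro n
  induction n with
  | zero => exact h0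
  | succ n ih =>
    have hcn := (le_abs_self _).trans (hc n)
    rw [hS n]
    rcases le_or_gt 0 (S n) with hSn | hSn
    · nlinarith [mul_nonneg (hlam n) hSn, hG n]
    · nlinarith [mul_le_mul_of_nonneg_left ih (hlam n), hsign n hSn, hG n]

end ClippedRecursion

theorem ocp_clipped_sum_bound_general
    (eps : ℝ) (heps : 0 < eps)
    (lam : ℕ → ℝ) (hlam : ∀ t, 0 < lam t)
    (f : ℕ → ℝ → ℝ) (rstar : ℕ → ℝ)
    (Sc Vc Gs rt r gs gclip : ℕ → ℝ)
    (hSc0 : Sc 0 = 0) (hVc0 : Vc 0 = 0) (hGs0 : Gs 0 = 0)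
    (hrt : ∀ t, 1 ≤ t →
      (Gs (t-1) = 0 → rt t = 0) ∧
      (Gs (t-1) ≠ 0 → rt t =
        eps * erfi (Sc (t-1) /
          (2 * Real.sqrt (Vc (t-1) + 2 * Gs (t-1) * Sc (t-1) + 16 * (Gs (t-1))^2)))
        - eps * Gs (t-1) / Real.sqrt (Vc (t-1) + 2 * Gs (t-1) * Sc (t-1) + 16 * (Gs (t-1))^2)
          * Real.exp ((Sc (t-1))^2 /
            (4 * (Vc (t-1) + 2 * Gs (t-1) * Sc (t-1) + 16 * (Gs (t-1))^2)))))
    (hr : ∀ t, 1 ≤ t → r t = max (rt t) 0)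
    (hrstar : ∀ t, 0 ≤ rstar t)
    (hmin : ∀ t, ∀ y ∈ Set.Ici (0:ℝ), f t (rstar t) ≤ f t y)
    (hsub : ∀ t, 1 ≤ t → ∀ y ∈ Set.Ici (0:ℝ), f t (r t) + gs t * (y - r t) ≤ f t y)
    (hneg : ∀ t, 1 ≤ t → r t = rstar t → gs t ≤ 0)
    (hclip : ∀ t, 1 ≤ t →
      gclip t = max (-(lam (t-1) * Gs (t-1))) (min (gs t) (lam (t-1) * Gs (t-1))))
    (hScrec : ∀ t, 1 ≤ t → Sc t = lam (t-1) * Sc (t-1) - gclip t)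
    (hVcrec : ∀ t, 1 ≤ t → Vc t = (lam (t-1))^2 * Vc (t-1) + (gclip t)^2)
    (hGsrec : ∀ t, 1 ≤ t → Gs t = max (lam (t-1) * Gs (t-1)) |gs t|) :
    ∀ t, 1 ≤ t →
      |Sc t| ≤ 2 * Real.sqrt (Vc t)
          * (1 + Real.sqrt (Real.log (1 + 2 * r (t+1) * eps⁻¹)))
        + 13 * Gs t * (1 + Real.sqrt (Real.log (1 + 2 * r (t+1) * eps⁻¹)))^2 := by
  intro t _
  have hG (n : ℕ) : Gs (n + 1) = max (lam n * Gs n) |gs (n + 1)| := hGsrec (n + 1) n.succ_pos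
  have hr' (n : ℕ) : r (n + 1) = max (rt (n + 1)) 0 := hr (n + 1) n.succ_pos
  have hGnn : ∀ n, 0 ≤ Gs n
    | 0 => hGs0.ge
    | n + 1 => hG n ▸ (abs_nonneg _).trans (le_max_right _ _)
  have hGstep (n : ℕ) : lam n * Gs n ≤ Gs (n + 1) := hG n ▸ le_max_left _ _
  have hVnn (n : ℕ) : 0 ≤ Vc n := by
    induction n with
    | zero => exact hVc0.ge
    | succ n ih => rw [hVcrec (n + 1) n.succ_pos]; positivity
  have hcabs (n : ℕ) : |gclip (n + 1)| ≤ lam n * Gs n :=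
    hclip (n + 1) n.succ_pos ▸ abs_clip_le (mul_nonneg (hlam n).le (hGnn n))
  have hrt_eq (n : ℕ) (h : Gs n ≠ 0) : rt (n + 1) = acpRadius eps (Sc n) (Vc n) (Gs n) :=
    (hrt (n + 1) n.succ_pos).2 h
  have hr_zero (n : ℕ) (hSn : Sc n ≤ 0) : r (n + 1) = 0 := by
    refine (hr' n).trans (max_eq_right ?_)
    by_cases h : Gs n = 0
    · exact ((hrt (n + 1) n.succ_pos).1 h).le
    · exact hrt_eq n h ▸ acpRadius_nonpos heps.le (hGnn n) hSn
  have hsign (n : ℕ) (hSn : Sc n < 0) : gclip (n + 1) ≤ 0 := by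
    have hz := hr_zero n hSn.le
    have hgs : gs (n + 1) ≤ 0 := nonpos_of_subgradient_at_zero (φ := f (n + 1)) (hrstar _)
      (hmin _ 0 Set.self_mem_Ici) (by simpa [hz] using hsub (n + 1) n.succ_pos _ (hrstar _))
      (fun h => hneg (n + 1) n.succ_pos (hz.trans h))
    rw [hclip (n + 1) n.succ_pos]
    exact max_le (neg_nonpos.2 (mul_nonneg (hlam n).le (hGnn n))) (min_le_of_left_le hgs)
  have hSrec (n : ℕ) : Sc (n + 1) = lam n * Sc n - gclip (n + 1) := hScrec (n + 1) n.succ_pos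
  rcases (hGnn t).eq_or_lt with hG0 | hGpos
  · rw [eq_zero_of_clipped_step hSc0 hlam hGnn hSrec hcabs hGstep t hG0.symm, abs_zero]
    positivity
  exact abs_le_of_acpRadius_le heps (hVnn t) hGpos
    (neg_le_of_clipped_step (by simp [hSc0, hGs0]) (fun n => (hlam n).le) hSrec hcabs hGstep hsign t)
    ((hr' t).symm ▸ le_max_right _ _) (hrt_eq t hGpos.ne' ▸ (hr' t).symm ▸ le_max_left _ _)

/-- For the discounted OCP algorithm `A_CP`, the discounted clipped gradient
sum is controlled by the prediction magnitude:
`|S*_{t,clip}| ≤ 2√(V*_{t,clip})(1+√log(1+2r_{t+1}/ε)) + 13·G*_t·(1+√log(1+2r_{t+1}/ε))²`. -/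
theorem ocp_clipped_sum_bound
    (eps : ℝ) (heps : 0 < eps)
    (lam : ℕ → ℝ) (hlam : ∀ t, 0 < lam t) (hlam0 : lam 0 = 1)
    (f : ℕ → ℝ → ℝ) (rstar : ℕ → ℝ)
    (Sc Vc Gs rt r gs gclip : ℕ → ℝ)
    (hSc0 : Sc 0 = 0) (hVc0 : Vc 0 = 0) (hGs0 : Gs 0 = 0)
    (hrt : ∀ t, 1 ≤ t →
      (Gs (t-1) = 0 → rt t = 0) ∧
      (Gs (t-1) ≠ 0 → rt t =
        eps * erfi (Sc (t-1) /
          (2 * Real.sqrt (Vc (t-1) + 2 * Gs (t-1) * Sc (t-1) + 16 * (Gs (t-1))^2)))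
        - eps * Gs (t-1) / Real.sqrt (Vc (t-1) + 2 * Gs (t-1) * Sc (t-1) + 16 * (Gs (t-1))^2)
          * Real.exp ((Sc (t-1))^2 /
            (4 * (Vc (t-1) + 2 * Gs (t-1) * Sc (t-1) + 16 * (Gs (t-1))^2)))))
    (hr : ∀ t, 1 ≤ t → r t = max (rt t) 0)
    (hfconv : ∀ t, ConvexOn ℝ (Set.Ici 0) (f t))
    (hrstar : ∀ t, 0 ≤ rstar t)
    (hmin : ∀ t, ∀ y ∈ Set.Ici (0:ℝ), f t (rstar t) ≤ f t y)
    (hsub : ∀ t, 1 ≤ t → ∀ y ∈ Set.Ici (0:ℝ), f t (r t) + gs t * (y - r t) ≤ f t y)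
    (hneg : ∀ t, 1 ≤ t → r t = rstar t → gs t ≤ 0)
    (hclip : ∀ t, 1 ≤ t →
      gclip t = max (-(lam (t-1) * Gs (t-1))) (min (gs t) (lam (t-1) * Gs (t-1))))
    (hScrec : ∀ t, 1 ≤ t → Sc t = lam (t-1) * Sc (t-1) - gclip t)
    (hVcrec : ∀ t, 1 ≤ t → Vc t = (lam (t-1))^2 * Vc (t-1) + (gclip t)^2)
    (hGsrec : ∀ t, 1 ≤ t → Gs t = max (lam (t-1) * Gs (t-1)) |gs t|) :
    ∀ t, 1 ≤ t →
      |Sc t| ≤ 2 * Real.sqrt (Vc t)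
          * (1 + Real.sqrt (Real.log (1 + 2 * r (t+1) * eps⁻¹)))
        + 13 * Gs t * (1 + Real.sqrt (Real.log (1 + 2 * r (t+1) * eps⁻¹)))^2 :=
  ocp_clipped_sum_bound_general eps heps lam hlam f rstar Sc Vc Gs rt r gs gclip hSc0 hVc0 hGs0 hrt
    hr hrstar hmin hsub hneg hclip hScrec hVcrec hGsrec
end

section
/- Let λ_1,…,λ_{T-1} ∈ (0,∞) and define H_t := Σ_{i=1}^t ∏_{j=i}^{t-1} λ_j² (so H_1 = 1 and H_t = λ_{t-1}²·H_{t-1} + 1). Then for all T ∈ ℕ_+: Σ_{t=1}^T H_t^{-1/2}·(∏_{i=t}^{T-1} λ_i) ≤ 2·√H_T. -/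
open scoped BigOperators

open Finset

/-! With `S_T` the left-hand side, both sides obey one-step recursions,
`H_{T+1} = λ_T² H_T + 1` and `S_{T+1} = λ_T S_T + H_{T+1}^{-1/2}`, so by induction it suffices that
`2 √y + (√(y + 1))⁻¹ ≤ 2 √(y + 1)` for `y = λ_T² H_T ≥ 0`. With `a = √(y+1)`, `b = √y` this reads
`(a - b)² ≥ 0` after multiplying by `a`, since `a² - b² = 1`. -/

theorem two_mul_sqrt_add_inv_sqrt_add_one_le {y : ℝ} (hy : 0 ≤ y) :
    2 * √y + (√(y + 1))⁻¹ ≤ 2 * √(y + 1) := by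
  set a := √(y + 1)
  set b := √y
  have ha : 0 < a := Real.sqrt_pos.mpr (by linarith)
  have ha2 : a ^ 2 = y + 1 := Real.sq_sqrt (by linarith)
  have hb2 : b ^ 2 = y := Real.sq_sqrt hy
  have hdiff : (2 * a - 2 * b - a⁻¹) * a = (a - b) ^ 2 := by
    field_simp
    linear_combination ha2 - hb2
  have := (mul_nonneg_iff_of_pos_right ha).mp (hdiff ▸ sq_nonneg (a - b))
  linarith

theorem sum_Icc_mul_prod_Ico_succ {R : Type*} [CommSemiring R] (f g : ℕ → R) {a T : ℕ}
    (ha : a ≤ T + 1) :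
    ∑ t ∈ Icc a (T + 1), f t * ∏ i ∈ Ico t (T + 1), g i
      = (∑ t ∈ Icc a T, f t * ∏ i ∈ Ico t T, g i) * g T + f (T + 1) := by
  rw [sum_Icc_succ_top ha, Ico_self, prod_empty, mul_one, sum_mul]
  congr 1
  refine sum_congr rfl fun t ht => ?_
  rw [prod_Ico_succ_top (mem_Icc.mp ht).2, mul_assoc]

theorem Icc_sub_one_eq_Ico_of_one_le {i : ℕ} (hi : 1 ≤ i) (t : ℕ) : Icc i (t - 1) = Ico i t := by
  ext j
  simp only [mem_Icc, mem_Ico]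
  omega

-- `Ico i t` stands for the paper's `j = i, …, t-1`, avoiding truncated subtraction.
noncomputable def effectiveHorizon (lam : ℕ → ℝ) (t : ℕ) : ℝ :=
  ∑ i ∈ Icc 1 t, ∏ j ∈ Ico i t, lam j ^ 2

theorem effectiveHorizon_succ (lam : ℕ → ℝ) (t : ℕ) :
    effectiveHorizon lam (t + 1) = lam t ^ 2 * effectiveHorizon lam t + 1 := by
  simpa [effectiveHorizon, mul_comm] using
    sum_Icc_mul_prod_Ico_succ (fun _ => (1 : ℝ)) (fun j => lam j ^ 2) (Nat.le_add_left 1 t)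

theorem effectiveHorizon_nonneg (lam : ℕ → ℝ) (t : ℕ) : 0 ≤ effectiveHorizon lam t :=
  sum_nonneg fun _ _ => prod_nonneg fun _ _ => sq_nonneg _

theorem sum_inv_sqrt_effectiveHorizon_mul_prod_le {lam : ℕ → ℝ} (hlam : ∀ i, 0 ≤ lam i)
    (T : ℕ) :
    ∑ t ∈ Icc 1 T, (√(effectiveHorizon lam t))⁻¹ * ∏ i ∈ Ico t T, lam i
      ≤ 2 * √(effectiveHorizon lam T) := by
  induction T with
  | zero => simp
  | succ T ih =>
    rw [sum_Icc_mul_prod_Ico_succ _ _ (Nat.le_add_left 1 T), effectiveHorizon_succ]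
    have hHT := effectiveHorizon_nonneg lam T
    calc _ ≤ 2 * √(effectiveHorizon lam T) * lam T
            + (√(lam T ^ 2 * effectiveHorizon lam T + 1))⁻¹ := by
          gcongr
          exact hlam T
      _ = 2 * √(lam T ^ 2 * effectiveHorizon lam T)
            + (√(lam T ^ 2 * effectiveHorizon lam T + 1))⁻¹ := by
          rw [Real.sqrt_mul (sq_nonneg _), Real.sqrt_sq (hlam T)]
          ring
      _ ≤ _ := two_mul_sqrt_add_inv_sqrt_add_one_le (by positivity)

theorem discounted_stepsize_sum_bound_general
    (T : ℕ)
    (lam : ℕ → ℝ) (hlam : ∀ i, 0 < lam i)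
    (H : ℕ → ℝ)
    (hH : ∀ t, H t = ∑ i ∈ Finset.Icc 1 t, ∏ j ∈ Finset.Icc i (t-1), (lam j)^2) :
    ∑ t ∈ Finset.Icc 1 T, (Real.sqrt (H t))⁻¹ * (∏ i ∈ Finset.Icc t (T-1), lam i)
      ≤ 2 * Real.sqrt (H T) := by
  have hH' : H = effectiveHorizon lam := funext fun t => by
    rw [hH, effectiveHorizon]
    exact sum_congr rfl fun i hi => by rw [Icc_sub_one_eq_Ico_of_one_le (mem_Icc.mp hi).1]
  subst hH'
  have hprod : ∀ t ∈ Icc 1 T, ∏ i ∈ Icc t (T - 1), lam i = ∏ i ∈ Ico t T, lam i :=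
    fun t ht => by rw [Icc_sub_one_eq_Ico_of_one_le (mem_Icc.mp ht).1]
  rw [sum_congr rfl fun t ht => by rw [hprod t ht]]
  exact sum_inv_sqrt_effectiveHorizon_mul_prod_le (fun i => (hlam i).le) T

/-- `Σ_{t=1}^T H_t^{-1/2} · (∏_{i=t}^{T-1} λ_i) ≤ 2·√H_T`, where
`H_t = Σ_{i=1}^t ∏_{j=i}^{t-1} λ_j²`. -/
theorem discounted_stepsize_sum_bound
    (T : ℕ) (hT : 1 ≤ T)
    (lam : ℕ → ℝ) (hlam : ∀ i, 0 < lam i)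
    (H : ℕ → ℝ)
    (hH : ∀ t, H t = ∑ i ∈ Finset.Icc 1 t, ∏ j ∈ Finset.Icc i (t-1), (lam j)^2) :
    ∑ t ∈ Finset.Icc 1 T, (Real.sqrt (H t))⁻¹ * (∏ i ∈ Finset.Icc t (T-1), lam i)
      ≤ 2 * Real.sqrt (H T) :=
  discounted_stepsize_sum_bound_general T lam hlam H hH
end

section
/- (Equivalence of discounted FTRL and L2-regularized OGD.) Let λ ∈ (0,1), η > 0, set γ := (1−λ)·η^{-1}, and let g_1, g_2, … ∈ ℝ^d. Consider OGD with learning rate η on the regularized losses f_t(x) := ⟨g_t, x⟩ + (γ/2)·‖x‖², starting from x_1 = 0 with updates x_{t+1} = x_t − η·g_t − η·γ·x_t on the domain ℝ^d. Then for all t ≥ 1: x_{t+1} = −η·Σ_{i=1}^t (1−ηγ)^{t−i}·g_i = −η·Σ_{i=1}^t λ^{t−i}·g_i; that is, the iterates coincide with those of discounted FTRL with linear prediction function φ_{t+1}(x) = η·λ^{t-1}·x applied to the rescaled gradient sums −Σ_{i=1}^t λ^{1−i}·g_i. -/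
/-!
With `γ = (1 - λ) / η` the regularized OGD step reads `x (t+1) = λ • x t - η • g t`, a linear
recurrence whose solution from `x 1 = 0` is the `λ`-discounted gradient sum; the FTRL form only
factors `λ ^ (t-1)` out of `λ ^ (t-i)`.
-/

open Finset

section DiscountedSum

variable {R M : Type*} [CommRing R] [AddCommGroup M] [Module R M]

theorem sum_Icc_pow_sub_smul_succ (c : R) (b : ℕ → M) (t : ℕ) :
    ∑ i ∈ Icc 1 (t + 1), c ^ (t + 1 - i) • b i
      = c • ∑ i ∈ Icc 1 t, c ^ (t - i) • b i + b (t + 1) := by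
  rw [sum_Icc_succ_top (Nat.le_add_left 1 t), Nat.sub_self, pow_zero, one_smul, smul_sum]
  congr 1
  refine sum_congr rfl fun i hi => ?_
  rw [smul_smul, ← pow_succ', Nat.sub_add_comm (mem_Icc.mp hi).2]

theorem eq_sum_pow_smul_of_eq_smul_add {c : R} {b x : ℕ → M} (hx1 : x 1 = 0)
    (hrec : ∀ t, 1 ≤ t → x (t + 1) = c • x t + b t) :
    ∀ t, x (t + 1) = ∑ i ∈ Icc 1 t, c ^ (t - i) • b i
  | 0 => by simpa using hx1
  | t + 1 => by
    rw [hrec (t + 1) (Nat.le_add_left 1 t), eq_sum_pow_smul_of_eq_smul_add hx1 hrec t,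
      sum_Icc_pow_sub_smul_succ]

end DiscountedSum

theorem pow_pred_smul_sum_zpow_one_sub_smul {K M : Type*} [Field K] [AddCommGroup M] [Module K M]
    {c : K} (hc : c ≠ 0) (b : ℕ → M) (t : ℕ) :
    c ^ (t - 1) • ∑ i ∈ Icc 1 t, c ^ ((1 : ℤ) - i) • b i = ∑ i ∈ Icc 1 t, c ^ (t - i) • b i := by
  rw [smul_sum]
  refine sum_congr rfl fun i hi => ?_
  obtain ⟨hi1, hit⟩ := mem_Icc.mp hi
  rw [smul_smul, ← zpow_natCast, ← zpow_natCast, ← zpow_add₀ hc]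
  congr 2
  omega

theorem regularized_ogd_eq_discounted_ftrl_general
    (d : ℕ) (lam η : ℝ) (hlam0 : 0 < lam) (hη : 0 < η)
    (γ : ℝ) (hγ : γ = (1 - lam) * η⁻¹)
    (g x : ℕ → EuclideanSpace ℝ (Fin d))
    (hx1 : x 1 = 0)
    (hrec : ∀ t, 1 ≤ t → x (t+1) = x t - η • g t - (η * γ) • x t) :
    ∀ t, 1 ≤ t →
      x (t+1) = (-η) • ∑ i ∈ Finset.Icc 1 t, (1 - η * γ)^(t-i) • g i
      ∧ x (t+1) = (-η) • ∑ i ∈ Finset.Icc 1 t, lam^(t-i) • g i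
      ∧ x (t+1) = (η * lam^(t-1)) •
          (-(∑ i ∈ Finset.Icc 1 t, (lam ^ ((1:ℤ) - (i:ℤ))) • g i)) := by
  intro t _
  have hdecay : 1 - η * γ = lam := by
    rw [hγ]
    field_simp
    ring
  have hogd : x (t + 1) = (-η) • ∑ i ∈ Icc 1 t, lam ^ (t - i) • g i := by
    have hlin : ∀ s, 1 ≤ s → x (s + 1) = lam • x s + (-η) • g s := fun s hs => by
      rw [hrec s hs, ← hdecay]
      module
    rw [eq_sum_pow_smul_of_eq_smul_add hx1 hlin t, smul_sum]
    exact sum_congr rfl fun i _ => smul_comm _ _ _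
  refine ⟨hdecay ▸ hogd, hogd, ?_⟩
  rw [hogd, mul_smul, smul_neg, pow_pred_smul_sum_zpow_one_sub_smul hlam0.ne', neg_smul, smul_neg]

/-- Equivalence of `L2`-regularized OGD (with weight `γ = (1−λ)/η`) and
discounted FTRL with the linear prediction function `φ_{t+1}(y) = η·λ^{t-1}·y` applied to the
rescaled gradient sums `−Σ_{i=1}^t λ^{1−i} g_i`. -/
theorem regularized_ogd_eq_discounted_ftrl
    (d : ℕ) (lam η : ℝ) (hlam0 : 0 < lam) (hlam1 : lam < 1) (hη : 0 < η)
    (γ : ℝ) (hγ : γ = (1 - lam) * η⁻¹)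
    (g x : ℕ → EuclideanSpace ℝ (Fin d))
    (hx1 : x 1 = 0)
    (hrec : ∀ t, 1 ≤ t → x (t+1) = x t - η • g t - (η * γ) • x t) :
    ∀ t, 1 ≤ t →
      x (t+1) = (-η) • ∑ i ∈ Finset.Icc 1 t, (1 - η * γ)^(t-i) • g i
      ∧ x (t+1) = (-η) • ∑ i ∈ Finset.Icc 1 t, lam^(t-i) • g i
      ∧ x (t+1) = (η * lam^(t-1)) •
          (-(∑ i ∈ Finset.Icc 1 t, (lam ^ ((1:ℤ) - (i:ℤ))) • g i)) :=
  regularized_ogd_eq_discounted_ftrl_general d lam η hlam0 hη γ hγ g x hx1 hrec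
end

section
/- Let λ_t ∈ (0,∞) for t ≥ 0 with λ_0 := 1, let g_1,…,g_T ∈ ℝ, define h_1 = 0 and h_{t+1} = max(λ_{t-1}·h_t, |g_t|), and let g_{t,clip} be the projection of g_t onto [−λ_{t-1}·h_t, λ_{t-1}·h_t]. Then for any real numbers x_1,…,x_T, u, and any N ∈ [1:T]: Σ_{t=1}^{N} (∏_{i=1}^{t-1} λ_i^{-1})·|g_t − g_{t,clip}|·|x_t − u| ≤ (max_{t∈[1:N]} |x_t − u|)·(∏_{i=1}^{N-1} λ_i^{-1})·h_{N+1}. In particular, |g_t − g_{t,clip}| = h_{t+1} − λ_{t-1}·h_t for every t, and the weighted sum of clipping errors telescopes. -/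
open scoped BigOperators

private lemma clip_abs (g a : ℝ) (ha : 0 ≤ a) :
    |g - max (-a) (min g a)| = max |g| a - a := by
  rcases le_total a g with h1 | h1
  · rw [min_eq_right h1, max_eq_right (by linarith), abs_of_nonneg (by linarith),
      abs_of_nonneg (by linarith), max_eq_left h1]
  · rcases le_total g (-a) with h2 | h2
    · rw [min_eq_left (by linarith), max_eq_left h2, abs_of_nonpos (by linarith),
        abs_of_nonpos (by linarith), max_eq_left (by linarith)]
      ring
    · rw [min_eq_left h1, max_eq_right h2, sub_self, abs_zero,
        max_eq_right (abs_le.mpr ⟨h2, h1⟩), sub_self]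

/-- The clipping errors satisfy `|g_t − g_{t,clip}| = h_{t+1} − λ_{t-1}·h_t`,
and the weighted sum of clipping errors telescopes:
`Σ_{t=1}^N (∏_{i<t} λ_i⁻¹)·|g_t − g_{t,clip}|·|x_t − u|
  ≤ (max_{t∈[1:N]} |x_t − u|)·(∏_{i<N} λ_i⁻¹)·h_{N+1}`. -/
theorem clipping_error_telescoping
    (T : ℕ) (hT : 1 ≤ T)
    (lam : ℕ → ℝ) (hlam : ∀ t, 0 < lam t) (hlam0 : lam 0 = 1)
    (g h gclip : ℕ → ℝ)
    (hh1 : h 1 = 0)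
    (hh : ∀ t, 1 ≤ t → h (t+1) = max (lam (t-1) * h t) |g t|)
    (hclip : ∀ t, 1 ≤ t →
      gclip t = max (-(lam (t-1) * h t)) (min (g t) (lam (t-1) * h t)))
    (x : ℕ → ℝ) (u : ℝ)
    (N : ℕ) (hN1 : 1 ≤ N) (hNT : N ≤ T) :
    (∀ t, 1 ≤ t → |g t - gclip t| = h (t+1) - lam (t-1) * h t) ∧
    ∑ t ∈ Finset.Icc 1 N, (∏ i ∈ Finset.Icc 1 (t-1), (lam i)⁻¹) *
        (|g t - gclip t| * |x t - u|)
      ≤ ((Finset.Icc 1 N).sup' (Finset.nonempty_Icc.mpr hN1) (fun t => |x t - u|))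
        * (∏ i ∈ Finset.Icc 1 (N-1), (lam i)⁻¹) * h (N+1) := by
  have hpos : ∀ t, 1 ≤ t → 0 ≤ h t := by
    intro t ht
    match t, ht with
    | 1, _ => rw [hh1]
    | (n+2), _ =>
      rw [hh (n+1) (by omega)]
      exact le_max_of_le_right (abs_nonneg _)
  have key : ∀ t, 1 ≤ t → |g t - gclip t| = h (t+1) - lam (t-1) * h t := by
    intro t ht
    have ha : 0 ≤ lam (t-1) * h t := mul_nonneg (hlam _).le (hpos t ht)
    rw [hclip t ht, clip_abs _ _ ha, hh t ht, max_comm]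
  refine ⟨key, ?_⟩
  set w : ℕ → ℝ := fun t => ∏ i ∈ Finset.Icc 1 (t-1), (lam i)⁻¹ with hw
  set f : ℕ → ℝ := fun t => w t * h (t+1) with hf
  have hwpos : ∀ t, 0 < w t := fun t => Finset.prod_pos fun i _ => inv_pos.mpr (hlam i)
  have hwl : ∀ t, 1 ≤ t → w t * lam (t-1) = w (t-1) := by
    intro t ht
    match t, ht with
    | 1, _ =>
      simp [hw, hlam0]
    | (n+2), _ =>
      show (∏ i ∈ Finset.Icc 1 (n+1), (lam i)⁻¹) * lam (n+1) = ∏ i ∈ Finset.Icc 1 n, (lam i)⁻¹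
      rw [Finset.prod_Icc_succ_top (by omega : 1 ≤ n+1), mul_assoc,
        inv_mul_cancel₀ (hlam _).ne', mul_one]
  have hd : ∀ t, 1 ≤ t → 0 ≤ h (t+1) - lam (t-1) * h t := by
    intro t ht
    rw [hh t ht]
    simp [le_max_left]
  have hterm : ∀ t, 1 ≤ t → w t * (h (t+1) - lam (t-1) * h t) = f t - f (t-1) := by
    intro t ht
    have ht1 : t - 1 + 1 = t := by omega
    simp only [hf]
    rw [ht1, mul_sub, ← mul_assoc, hwl t ht]
  have hf0 : f 0 = 0 := by simp [hf, hh1]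
  set M := ((Finset.Icc 1 N).sup' (Finset.nonempty_Icc.mpr hN1) (fun t => |x t - u|)) with hM
  have hM0 : 0 ≤ M :=
    le_trans (abs_nonneg (x 1 - u))
      (Finset.le_sup' (fun t => |x t - u|) (Finset.mem_Icc.mpr ⟨le_refl 1, hN1⟩))
  have hstep : ∀ t ∈ Finset.Icc 1 N,
      w t * (|g t - gclip t| * |x t - u|) ≤ M * (f t - f (t-1)) := by
    intro t htm
    have ht : 1 ≤ t := (Finset.mem_Icc.mp htm).1
    rw [key t ht, ← hterm t ht]
    have hxM : |x t - u| ≤ M := Finset.le_sup' (fun t => |x t - u|) htm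
    have h1 : w t * (h (t+1) - lam (t-1) * h t) * |x t - u|
        ≤ w t * (h (t+1) - lam (t-1) * h t) * M :=
      mul_le_mul_of_nonneg_left hxM (mul_nonneg (hwpos t).le (hd t ht))
    nlinarith [h1]
  calc ∑ t ∈ Finset.Icc 1 N, w t * (|g t - gclip t| * |x t - u|)
      ≤ ∑ t ∈ Finset.Icc 1 N, M * (f t - f (t-1)) := Finset.sum_le_sum hstep
    _ = M * ∑ t ∈ Finset.Icc 1 N, (f t - f (t-1)) := by rw [Finset.mul_sum]
    _ = M * (f N - f 0) := by
        congr 1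
        rw [show Finset.Icc 1 N = Finset.Ico 1 (N+1) by rfl, Finset.sum_Ico_eq_sum_range]
        have : ∀ i ∈ Finset.range (N + 1 - 1), f (1 + i) - f (1 + i - 1) = f (i + 1) - f i := by
          intro i _
          congr 2 <;> omega
        rw [Finset.sum_congr rfl this, Finset.sum_range_sub]
        norm_num
    _ = M * f N := by rw [hf0, sub_zero]
    _ = M * w N * h (N+1) := by rw [hf, mul_assoc]
end

section
/- (Equivalence of the discounted and rescaled-undiscounted magnitude learners.) Fix ε > 0, discount factors λ_t ∈ (0,∞) (λ_0 := 1), and gradients g_1,…,g_T ∈ ℝ. Let (v^D_t, s^D_t, h^D_t, x̃^D_t, x^D_t) be the internal states, unprojected predictions, and predictions of the discounted 1D magnitude learner (Algorithm 1: v_1 = s_1 = h_1 = 0; erfi-based unprojected prediction x̃_t from (v_t, s_t, h_t); x_t = max(x̃_t, 0); g_{t,clip} = projection of g_t onto [−λ_{t-1}h_t, λ_{t-1}h_t]; h_{t+1} = max(λ_{t-1}h_t, |g_t|); g̃_{t,clip} = 0 if g_{t,clip}·x̃_t < g_{t,clip}·x_t, else g_{t,clip}; v_{t+1} = λ_{t-1}²v_t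 + g̃_{t,clip}², s_{t+1} = λ_{t-1}s_t − g̃_{t,clip}) run on g_{1:T}, and let (v^{ND}_t, s^{ND}_t, h^{ND}_t, x̃^{ND}_t, x^{ND}_t) be those of the undiscounted learner (Algorithm 2: same rules with all λ's equal to 1) run on the rescaled gradients ĝ_t := (∏_{i=1}^{t-1} λ_i^{-1})·g_t. Then for every t ∈ [1:T]: s^D_t = (∏_{i=1}^{t-2} λ_i)·s^{ND}_t, v^D_t = (∏_{i=1}^{t-2} λ_i²)·v^{ND}_t, h^D_t = (∏_{i=1}^{t-2} λ_i)·h^{ND}_t, and consequently x̃^D_t = x̃^{ND}_t and x^D_t = x^{ND}_t. -/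
open scoped BigOperators

/-- Equivalence of the discounted magnitude learner run on `g_{1:T}` and
the undiscounted magnitude learner run on the rescaled gradients `ĝ_t = (∏_{i<t} λ_i⁻¹)·g_t`:
the states are related by rescaling and the predictions coincide. -/
theorem discounted_undiscounted_equivalence
    (eps : ℝ) (heps : 0 < eps)
    (lam : ℕ → ℝ) (hlam : ∀ t, 0 < lam t) (hlam0 : lam 0 = 1)
    (T : ℕ) (hT : 1 ≤ T)
    (g ghat : ℕ → ℝ)
    (hghat : ∀ t, ghat t = (∏ i ∈ Finset.Icc 1 (t-1), (lam i)⁻¹) * g t)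
    (vD sD hD xtD xD gclipD gtD : ℕ → ℝ)
    (vN sN hN xtN xN gclipN gtN : ℕ → ℝ)
    -- the discounted learner (Algorithm 1) run on g
    (hvD1 : vD 1 = 0) (hsD1 : sD 1 = 0) (hhD1 : hD 1 = 0)
    (hxtD : ∀ t, 1 ≤ t →
      (hD t = 0 → xtD t = 0) ∧
      (hD t ≠ 0 → xtD t =
        eps * erfi (sD t / (2 * Real.sqrt (vD t + 2 * hD t * sD t + 16 * (hD t)^2)))
        - eps * hD t / Real.sqrt (vD t + 2 * hD t * sD t + 16 * (hD t)^2)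
          * Real.exp ((sD t)^2 / (4 * (vD t + 2 * hD t * sD t + 16 * (hD t)^2)))))
    (hxD : ∀ t, 1 ≤ t → xD t = max (xtD t) 0)
    (hclipD : ∀ t, 1 ≤ t →
      gclipD t = max (-(lam (t-1) * hD t)) (min (g t) (lam (t-1) * hD t)))
    (hhD : ∀ t, 1 ≤ t → hD (t+1) = max (lam (t-1) * hD t) |g t|)
    (hgtD : ∀ t, 1 ≤ t →
      gtD t = if gclipD t * xtD t < gclipD t * xD t then 0 else gclipD t)
    (hvD : ∀ t, 1 ≤ t → vD (t+1) = (lam (t-1))^2 * vD t + (gtD t)^2)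
    (hsD : ∀ t, 1 ≤ t → sD (t+1) = lam (t-1) * sD t - gtD t)
    -- the undiscounted learner (Algorithm 2) run on ghat
    (hvN1 : vN 1 = 0) (hsN1 : sN 1 = 0) (hhN1 : hN 1 = 0)
    (hxtN : ∀ t, 1 ≤ t →
      (hN t = 0 → xtN t = 0) ∧
      (hN t ≠ 0 → xtN t =
        eps * erfi (sN t / (2 * Real.sqrt (vN t + 2 * hN t * sN t + 16 * (hN t)^2)))
        - eps * hN t / Real.sqrt (vN t + 2 * hN t * sN t + 16 * (hN t)^2)
          * Real.exp ((sN t)^2 / (4 * (vN t + 2 * hN t * sN t + 16 * (hN t)^2)))))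
    (hxN : ∀ t, 1 ≤ t → xN t = max (xtN t) 0)
    (hclipN : ∀ t, 1 ≤ t → gclipN t = max (-(hN t)) (min (ghat t) (hN t)))
    (hhN : ∀ t, 1 ≤ t → hN (t+1) = max (hN t) |ghat t|)
    (hgtN : ∀ t, 1 ≤ t →
      gtN t = if gclipN t * xtN t < gclipN t * xN t then 0 else gclipN t)
    (hvN : ∀ t, 1 ≤ t → vN (t+1) = vN t + (gtN t)^2)
    (hsN : ∀ t, 1 ≤ t → sN (t+1) = sN t - gtN t) :
    ∀ t, 1 ≤ t → t ≤ T →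
      sD t = (∏ i ∈ Finset.Icc 1 (t-2), lam i) * sN t ∧
      vD t = (∏ i ∈ Finset.Icc 1 (t-2), (lam i)^2) * vN t ∧
      hD t = (∏ i ∈ Finset.Icc 1 (t-2), lam i) * hN t ∧
      xtD t = xtN t ∧ xD t = xN t := by
  -- scaling factor
  set c : ℕ → ℝ := fun t => ∏ i ∈ Finset.Icc 1 (t-2), lam i with hc
  have hcpos : ∀ t, 0 < c t := fun t => Finset.prod_pos (fun i _ => hlam i)
  have hcne : ∀ t, c t ≠ 0 := fun t => ne_of_gt (hcpos t)
  have hcsq : ∀ t, (∏ i ∈ Finset.Icc 1 (t-2), (lam i)^2) = (c t)^2 := by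
    intro t; rw [hc]; exact Finset.prod_pow _ _ _
  have hc1 : c 1 = 1 := by simp [hc]
  have hstep : ∀ t, 1 ≤ t → c (t+1) = lam (t-1) * c t := by
    intro t ht
    obtain ⟨k, rfl⟩ : ∃ k, t = k + 1 := ⟨t - 1, by omega⟩
    cases k with
    | zero => simp [hc, hlam0]
    | succ n =>
      show (∏ i ∈ Finset.Icc 1 (n+1), lam i) = lam (n+1) * ∏ i ∈ Finset.Icc 1 n, lam i
      rw [Finset.prod_Icc_succ_top (by omega), mul_comm]
  -- g t in terms of ghat t
  have hg : ∀ t, 1 ≤ t → g t = c (t+1) * ghat t := by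
    intro t ht
    have : (∏ i ∈ Finset.Icc 1 (t-1), (lam i)⁻¹) = (c (t+1))⁻¹ := by
      simp only [hc]
      rw [show (t+1) - 2 = t - 1 from by omega, Finset.prod_inv_distrib]
    rw [hghat t, this, ← mul_assoc, mul_inv_cancel₀ (hcne (t+1)), one_mul]
  -- prediction equality from scaled states
  have hpred : ∀ t, 1 ≤ t → sD t = c t * sN t → vD t = (c t)^2 * vN t →
      hD t = c t * hN t → xtD t = xtN t := by
    intro t ht hs hv hh
    by_cases h0 : hN t = 0
    · rw [(hxtD t ht).1 (by rw [hh, h0, mul_zero]), (hxtN t ht).1 h0]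
    · have hDne : hD t ≠ 0 := by rw [hh]; exact mul_ne_zero (hcne t) h0
      rw [(hxtD t ht).2 hDne, (hxtN t ht).2 h0, hs, hv, hh]
      set B := vN t + 2 * hN t * sN t + 16 * (hN t)^2 with hB
      have hA : (c t)^2 * vN t + 2 * (c t * hN t) * (c t * sN t)
          + 16 * (c t * hN t)^2 = (c t)^2 * B := by rw [hB]; ring
      have hsq : Real.sqrt ((c t)^2 * B) = c t * Real.sqrt B := by
        rw [Real.sqrt_mul (sq_nonneg _), Real.sqrt_sq (hcpos t).le]
      rw [hA, hsq]
      have e1 : c t * sN t / (2 * (c t * Real.sqrt B)) = sN t / (2 * Real.sqrt B) := by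
        rw [show 2 * (c t * Real.sqrt B) = c t * (2 * Real.sqrt B) by ring,
          mul_div_mul_left _ _ (hcne t)]
      have e2 : eps * (c t * hN t) / (c t * Real.sqrt B) = eps * hN t / Real.sqrt B := by
        rw [show eps * (c t * hN t) = c t * (eps * hN t) by ring,
          mul_div_mul_left _ _ (hcne t)]
      have e3 : (c t * sN t)^2 / (4 * ((c t)^2 * B)) = (sN t)^2 / (4 * B) := by
        rw [show (c t * sN t)^2 = (c t)^2 * (sN t)^2 by ring,
          show 4 * ((c t)^2 * B) = (c t)^2 * (4 * B) by ring,
          mul_div_mul_left _ _ (pow_ne_zero 2 (hcne t))]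
      rw [e1, e2, e3]
  -- main invariant by induction
  have key : ∀ t, 1 ≤ t → sD t = c t * sN t ∧ vD t = (c t)^2 * vN t ∧
      hD t = c t * hN t := by
    intro t ht
    induction t, ht using Nat.le_induction with
    | base => rw [hc1]; norm_num [hvD1, hsD1, hhD1, hvN1, hsN1, hhN1]
    | succ t ht ih =>
      obtain ⟨hs, hv, hh⟩ := ih
      have hxt : xtD t = xtN t := hpred t ht hs hv hh
      have hx : xD t = xN t := by rw [hxD t ht, hxN t ht, hxt]
      have hlh : lam (t-1) * hD t = c (t+1) * hN t := by
        rw [hh, hstep t ht]; ring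
      have hclip : gclipD t = c (t+1) * gclipN t := by
        rw [hclipD t ht, hclipN t ht, hg t ht, hlh,
          ← mul_min_of_nonneg _ _ (hcpos (t+1)).le,
          mul_max_of_nonneg _ _ (hcpos (t+1)).le, mul_neg]
      have hgt : gtD t = c (t+1) * gtN t := by
        rw [hgtD t ht, hgtN t ht, hclip, hxt, hx]
        have hiff : c (t+1) * gclipN t * xtN t < c (t+1) * gclipN t * xN t ↔
            gclipN t * xtN t < gclipN t * xN t := by
          rw [mul_assoc, mul_assoc]
          exact mul_lt_mul_iff_right₀ (hcpos (t+1))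
        by_cases hcond : gclipN t * xtN t < gclipN t * xN t
        · rw [if_pos (hiff.2 hcond), if_pos hcond, mul_zero]
        · rw [if_neg (fun h => hcond (hiff.1 h)), if_neg hcond]
      refine ⟨?_, ?_, ?_⟩
      · rw [hsD t ht, hsN t ht, hs, hgt, hstep t ht]; ring
      · rw [hvD t ht, hvN t ht, hv, hgt, hstep t ht]; ring
      · rw [hhD t ht, hhN t ht, hlh, hg t ht, abs_mul,
          abs_of_pos (hcpos (t+1)), ← mul_max_of_nonneg _ _ (hcpos (t+1)).le]
  intro t ht _
  obtain ⟨hs, hv, hh⟩ := key t ht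
  have hxt : xtD t = xtN t := hpred t ht hs hv hh
  exact ⟨hs, by rw [hcsq]; exact hv, hh, hxt, by rw [hxD t ht, hxN t ht, hxt]⟩
end

section
/- Let g_1,…,g_T ∈ ℝ^d with ‖g_t‖ ≤ G for all t, let X ⊂ ℝ^d be closed and convex with diameter at most D, let λ_1,…,λ_{T-1} ∈ (0,∞), and let x_1,…,x_T ∈ X satisfy the OGD recursion x_{t+1} = Π_X(x_t − η_t·g_t) with learning rates η_t > 0 satisfying η_t^{-1} ≥ λ_{t-1}·η_{t-1}^{-1} for all t ≥ 2. Then for all u ∈ X: Σ_{t=1}^T (∏_{i=t}^{T-1} λ_i)·⟨g_t, x_t − u⟩ ≤ D²/(2η_T) + (G²/2)·Σ_{t=1}^T η_t·(∏_{i=t}^{T-1} λ_i). -/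
open scoped BigOperators RealInnerProductSpace

private lemma proj_inner_le {E : Type*} [NormedAddCommGroup E] [InnerProductSpace ℝ E]
    {X : Set E} (hX : Convex ℝ X) {z p u : E} (hp : p ∈ X) (hu : u ∈ X)
    (hmin : ∀ y ∈ X, ‖p - z‖ ≤ ‖y - z‖) : ⟪z - p, u - p⟫ ≤ 0 := by
  haveI : Nonempty X := ⟨⟨p, hp⟩⟩
  have hiInf : ‖z - p‖ = ⨅ w : X, ‖z - w‖ := by
    apply le_antisymm
    · exact le_ciInf fun w => by simpa [norm_sub_rev] using hmin w w.2
    · have hbdd : BddBelow (Set.range fun w : X => ‖z - w‖) :=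
        ⟨0, by rintro b ⟨w, rfl⟩; positivity⟩
      exact ciInf_le hbdd ⟨p, hp⟩
  exact (norm_eq_iInf_iff_real_inner_le_zero hX hp).mp hiInf u hu

private lemma one_step_ogd {E : Type*} [NormedAddCommGroup E] [InnerProductSpace ℝ E]
    {X : Set E} (hX : Convex ℝ X) {xt p u gt : E} {e : ℝ} (he : 0 < e)
    (hp : p ∈ X) (hu : u ∈ X)
    (hmin : ∀ y ∈ X, ‖p - (xt - e • gt)‖ ≤ ‖y - (xt - e • gt)‖) :
    ⟪gt, xt - u⟫ ≤ (‖xt - u‖^2 - ‖p - u‖^2) / (2 * e) + e / 2 * ‖gt‖^2 := by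
  set z := xt - e • gt with hz
  have h1 : ⟪z - p, u - p⟫ ≤ 0 := proj_inner_le hX hp hu hmin
  have h2 : ‖p - u‖^2 ≤ ‖z - u‖^2 := by
    have e2 : z - u = (z - p) - (u - p) := by abel
    have e3 : ‖(z - p) - (u - p)‖^2 = ‖z - p‖^2 - 2 * ⟪z - p, u - p⟫ + ‖u - p‖^2 :=
      norm_sub_sq_real _ _
    have e4 : ‖u - p‖ = ‖p - u‖ := norm_sub_rev _ _
    rw [e2, e3, e4]
    nlinarith [sq_nonneg ‖z - p‖]
  have e1 : ‖z - u‖^2 = ‖xt - u‖^2 - 2 * e * ⟪gt, xt - u⟫ + e^2 * ‖gt‖^2 := by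
    have hzu : z - u = (xt - u) - e • gt := by rw [hz]; abel
    rw [hzu, norm_sub_sq_real, real_inner_smul_right, norm_smul, real_inner_comm]
    simp [mul_pow, sq_abs]
    ring
  have key : 2 * e * ⟪gt, xt - u⟫ ≤ ‖xt - u‖^2 - ‖p - u‖^2 + e^2 * ‖gt‖^2 := by
    nlinarith
  have h2e : (0:ℝ) < 2 * e := by linarith
  rw [div_add' _ _ _ (ne_of_gt h2e), le_div_iff₀ h2e]
  nlinarith [key]

/-- The intermediate discounted OGD inequality: for learning rates with
`η_t⁻¹ ≥ λ_{t-1}·η_{t-1}⁻¹`,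
`Σ_t (∏_{i=t}^{T-1} λ_i)·⟨g_t, x_t − u⟩ ≤ D²/(2η_T) + (G²/2)·Σ_t η_t·(∏_{i=t}^{T-1} λ_i)`. -/
theorem discounted_ogd_intermediate_bound
    (d T : ℕ) (hT : 1 ≤ T)
    (X : Set (EuclideanSpace ℝ (Fin d))) (hXclosed : IsClosed X) (hXconvex : Convex ℝ X)
    (D G : ℝ)
    (hdiam : ∀ x ∈ X, ∀ y ∈ X, ‖x - y‖ ≤ D)
    (lam : ℕ → ℝ) (hlam : ∀ i, 0 < lam i)
    (g : ℕ → EuclideanSpace ℝ (Fin d)) (hLip : ∀ t, ‖g t‖ ≤ G)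
    (η : ℕ → ℝ) (hηpos : ∀ t, 0 < η t)
    (hηmono : ∀ t, 2 ≤ t → lam (t-1) * (η (t-1))⁻¹ ≤ (η t)⁻¹)
    (x : ℕ → EuclideanSpace ℝ (Fin d)) (hxX : ∀ t, x t ∈ X)
    (hOGD : ∀ t, 1 ≤ t → x (t+1) ∈ X ∧
      ∀ y ∈ X, ‖x (t+1) - (x t - η t • g t)‖ ≤ ‖y - (x t - η t • g t)‖)
    (u : EuclideanSpace ℝ (Fin d)) (hu : u ∈ X) :
    ∑ t ∈ Finset.Icc 1 T, (∏ i ∈ Finset.Icc t (T-1), lam i) * ⟪g t, x t - u⟫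
      ≤ D^2 / (2 * η T)
        + G^2 / 2 * ∑ t ∈ Finset.Icc 1 T, η t * (∏ i ∈ Finset.Icc t (T-1), lam i) := by
  have haD : ∀ t, ‖x t - u‖^2 ≤ D^2 := fun t => by
    have h := hdiam (x t) (hxX t) u hu
    nlinarith [norm_nonneg (x t - u)]
  have hstep : ∀ t, 1 ≤ t → ⟪g t, x t - u⟫ ≤
      (‖x t - u‖^2 - ‖x (t+1) - u‖^2) / (2 * η t) + η t / 2 * G^2 := by
    intro t ht
    obtain ⟨hmem, hmin⟩ := hOGD t ht
    have h := one_step_ogd hXconvex (hηpos t) hmem hu hmin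
    have hg : η t / 2 * ‖g t‖^2 ≤ η t / 2 * G^2 := by
      have hg2 : ‖g t‖^2 ≤ G^2 := by nlinarith [norm_nonneg (g t), hLip t]
      have h0 : (0:ℝ) ≤ η t / 2 := by linarith [hηpos t]
      exact mul_le_mul_of_nonneg_left hg2 h0
    linarith
  have e1 : ∀ (c : ℝ) (t : ℕ), c / (2 * η t) = c * (η t)⁻¹ / 2 := by
    intro c t
    rw [div_eq_mul_inv, mul_inv]; ring
  have key : ∀ S, 1 ≤ S →
      ∑ t ∈ Finset.Icc 1 S, (∏ i ∈ Finset.Icc t (S-1), lam i) * ⟪g t, x t - u⟫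
        ≤ D^2 / (2 * η S) - ‖x (S+1) - u‖^2 / (2 * η S)
          + G^2 / 2 * ∑ t ∈ Finset.Icc 1 S, η t * (∏ i ∈ Finset.Icc t (S-1), lam i) := by
    intro S hS
    induction S, hS using Nat.le_induction with
    | base =>
      have h1 := hstep 1 le_rfl
      norm_num at h1 ⊢
      have hsub : (‖x 1 - u‖^2 - ‖x 2 - u‖^2) / (2 * η 1)
          = ‖x 1 - u‖^2 / (2 * η 1) - ‖x 2 - u‖^2 / (2 * η 1) := sub_div _ _ _
      have h2 : ‖x 1 - u‖^2 / (2 * η 1) ≤ D^2 / (2 * η 1) := by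
        have h0 := hηpos 1
        gcongr
        exact hdiam (x 1) (hxX 1) u hu
      rw [hsub] at h1
      linarith
    | succ S hS ih =>
      simp only [Nat.add_sub_cancel] at *
      have hSm : (S - 1) + 1 = S := by omega
      have hsum1 : ∑ t ∈ Finset.Icc 1 (S+1), (∏ i ∈ Finset.Icc t S, lam i) * ⟪g t, x t - u⟫
          = lam S * ∑ t ∈ Finset.Icc 1 S, (∏ i ∈ Finset.Icc t (S-1), lam i) * ⟪g t, x t - u⟫
            + ⟪g (S+1), x (S+1) - u⟫ := by
        rw [Finset.sum_Icc_succ_top (by omega : 1 ≤ S+1), Finset.mul_sum]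
        congr 1
        · apply Finset.sum_congr rfl
          intro t ht
          have htS : t ≤ S := (Finset.mem_Icc.mp ht).2
          rw [← hSm, Finset.prod_Icc_succ_top (by omega : t ≤ (S-1)+1), hSm]
          ring
        · rw [Finset.Icc_eq_empty (by omega), Finset.prod_empty, one_mul]
      have hsum2 : ∑ t ∈ Finset.Icc 1 (S+1), η t * (∏ i ∈ Finset.Icc t S, lam i)
          = lam S * ∑ t ∈ Finset.Icc 1 S, η t * (∏ i ∈ Finset.Icc t (S-1), lam i)
            + η (S+1) := by
        rw [Finset.sum_Icc_succ_top (by omega : 1 ≤ S+1), Finset.mul_sum]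
        congr 1
        · apply Finset.sum_congr rfl
          intro t ht
          have htS : t ≤ S := (Finset.mem_Icc.mp ht).2
          rw [← hSm, Finset.prod_Icc_succ_top (by omega : t ≤ (S-1)+1), hSm]
          ring
        · rw [Finset.Icc_eq_empty (by omega), Finset.prod_empty, mul_one]
      rw [hsum1, hsum2]
      have hmono := hηmono (S+1) (by omega)
      simp only [Nat.add_sub_cancel] at hmono
      have hmul : 0 ≤ (D^2 - ‖x (S+1) - u‖^2) * ((η (S+1))⁻¹ - lam S * (η S)⁻¹) :=
        mul_nonneg (by linarith [haD (S+1)]) (by linarith)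
      have ih' := mul_le_mul_of_nonneg_left ih (le_of_lt (hlam S))
      have hstep' := hstep (S+1) (by omega)
      rw [e1] at hstep'
      rw [e1, e1] at ih'
      rw [e1, e1]
      nlinarith [hmul, ih', hstep']
  have hfin := key T hT
  have hpos : 0 ≤ ‖x (T+1) - u‖^2 / (2 * η T) := by
    have := hηpos T
    positivity
  linarith
end
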